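/- arXiv:2510.00070 — 6 statements merged into one kernel-verified Lean document; each statement's English description precedes it below -/
import Mathlib

section
/- Let p and q be odd primes with p dividing q−1, and let G = ⟨x, y : x^p = y^q = 1, yx = xy^s⟩ with ord_q(s) = p. Then the sequence S = y^[q−1] · x · y^[q−1] · (x^{p−1} y^{s^{p−1}+1}) is a minimal product-one sequence: it cannot be written as the disjoint union of two nontrivial product-one subsequences. -/
/-- A multiset `S` over a group `G` is *product-one* if its terms admit an
ordering whose product is `1`. -/
def IsProductOne {G : Type*} [Group G] (S : Multiset G) : Prop :=
  ∃ l : List G, (l : Multiset G) = S ∧ l.prod = 1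

/-- A multiset `S` is a *minimal product-one sequence* (an atom) if it is a
nontrivial product-one sequence which cannot be partitioned into two
nontrivial product-one sub-multisets. -/
def IsMinimalProductOne {G : Type*} [Group G] (S : Multiset G) : Prop :=
  S ≠ 0 ∧ IsProductOne S ∧
    ¬ ∃ T₁ T₂ : Multiset G, T₁ ≠ 0 ∧ T₂ ≠ 0 ∧ S = T₁ + T₂ ∧
      IsProductOne T₁ ∧ IsProductOne T₂

/-- `prodSet S` is the set `π(S)` of all products of the terms of `S` over
all orderings. -/
def prodSet {G : Type*} [Group G] (S : Multiset G) : Set G :=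
  {g | ∃ l : List G, (l : Multiset G) = S ∧ l.prod = g}

/-- `vcount K S` is the number of terms of `S` lying in the set `K`. -/
noncomputable def vcount {G : Type*} (K : Set G) (S : Multiset G) : ℕ :=
  letI := Classical.decPred fun g => g ∈ K
  Multiset.card (S.filter fun g => g ∈ K)

/-!
Write `g = x ^ (p - 1) * y ^ (s ^ (p - 1) + 1)`. An ordering of a product-one sequence may be
rotated to start at any chosen term. A subsequence made of one of `x`, `g` and copies of `y` thus
has product `x ^ a * y ^ b` with `x ^ a ≠ 1`, which is never `1` because `⟨x⟩ ∩ ⟨y⟩ = 1`. So in a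
factorization one factor consists of `k` copies of `y` with `q ∣ k < 2q`, i.e. `k = q`, and the other
of `x`, `g` and `q - 2` copies of `y`. Started at `x`, an ordering of the latter has product
`x * y ^ j * g * y ^ k = y ^ ((j + 1) * s ^ (p - 1) + k + 1)` with `j + k = q - 2`, and modulo `q`
this exponent is `(j + 1) * (s ^ (p - 1) - 1) ≠ 0`.
-/

namespace Multiset

variable {α : Type*}

theorem coe_eq_replicate_iff {l : List α} {a : α} {n : ℕ} :
    (l : Multiset α) = replicate n a ↔ l = List.replicate n a := by
  rw [← coe_replicate, coe_eq_coe, List.perm_replicate]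

theorem exists_split_of_add_eq_cons {T₁ T₂ U : Multiset α} {a : α} (h : T₁ + T₂ = a ::ₘ U) :
    ∃ U₁ U₂, U₁ + U₂ = U ∧ (T₁ = a ::ₘ U₁ ∧ T₂ = U₂ ∨ T₁ = U₁ ∧ T₂ = a ::ₘ U₂) := by
  rcases mem_add.1 (h ▸ mem_cons_self a U) with h₁ | h₂
  · obtain ⟨U₁, rfl⟩ := exists_cons_of_mem h₁
    refine ⟨U₁, T₂, ?_, Or.inl ⟨rfl, rfl⟩⟩
    rwa [cons_add, cons_inj_right] at h
  · obtain ⟨U₂, rfl⟩ := exists_cons_of_mem h₂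
    refine ⟨T₁, U₂, ?_, Or.inr ⟨rfl, rfl⟩⟩
    rwa [add_cons, cons_inj_right] at h

theorem exists_eq_replicate_of_add_eq_replicate {T₁ T₂ : Multiset α} {a : α} {n : ℕ}
    (h : T₁ + T₂ = replicate n a) :
    ∃ k₁ k₂, k₁ + k₂ = n ∧ T₁ = replicate k₁ a ∧ T₂ = replicate k₂ a := by
  obtain ⟨k₁, -, h₁⟩ := le_replicate_iff.1 (h ▸ le_add_right T₁ T₂ : T₁ ≤ replicate n a)
  obtain ⟨k₂, -, h₂⟩ := le_replicate_iff.1 (h ▸ le_add_left T₂ T₁ : T₂ ≤ replicate n a)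
  subst h₁ h₂
  exact ⟨k₁, k₂, by simpa using congr_arg card h, rfl, rfl⟩

end Multiset

theorem List.exists_eq_replicate_append_cons_replicate {α : Type*} {l : List α} {a b : α} {n : ℕ}
    (h : (l : Multiset α) = a ::ₘ Multiset.replicate n b) :
    ∃ j k, j + k = n ∧ l = replicate j b ++ a :: replicate k b := by
  obtain ⟨l₁, l₂, rfl⟩ := append_of_mem (Multiset.mem_coe.1 (h ▸ Multiset.mem_cons_self a _))
  have h' : (l₁ : Multiset α) + l₂ = Multiset.replicate n b := by
    rw [← Multiset.cons_inj_right a, ← h, Multiset.coe_add, Multiset.cons_coe, Multiset.coe_eq_coe]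
    exact perm_middle.symm
  obtain ⟨j, k, hjk, h₁, h₂⟩ := Multiset.exists_eq_replicate_of_add_eq_replicate h'
  rw [Multiset.coe_eq_replicate_iff] at h₁ h₂
  exact ⟨j, k, hjk, by rw [h₁, h₂]⟩

section ProductOne

variable {G : Type*} [Group G]

theorem isProductOne_cons_iff {a : G} {T : Multiset G} :
    IsProductOne (a ::ₘ T) ↔ ∃ l : List G, (l : Multiset G) = T ∧ a * l.prod = 1 := by
  constructor
  · rintro ⟨l, hl, hprod⟩
    obtain ⟨l₁, l₂, rfl⟩ :=
      List.append_of_mem (Multiset.mem_coe.1 (hl ▸ Multiset.mem_cons_self a T))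
    refine ⟨l₂ ++ l₁, ?_, ?_⟩
    · rw [← Multiset.cons_inj_right a, ← hl, Multiset.cons_coe, Multiset.coe_eq_coe]
      exact (List.perm_middle.trans (List.perm_append_comm.cons a)).symm
    · rw [List.prod_append, List.prod_cons] at hprod
      rw [List.prod_append, ← mul_assoc]
      exact mul_eq_one_comm.1 hprod
  · rintro ⟨l, rfl, hprod⟩
    exact ⟨a :: l, rfl, by rwa [List.prod_cons]⟩

theorem isProductOne_replicate_iff {a : G} {n : ℕ} :
    IsProductOne (Multiset.replicate n a) ↔ a ^ n = 1 := by
  constructor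
  · rintro ⟨l, hl, hprod⟩
    rwa [Multiset.coe_eq_replicate_iff.1 hl, List.prod_replicate] at hprod
  · intro h
    exact ⟨List.replicate n a, Multiset.coe_replicate n a, by rwa [List.prod_replicate]⟩

theorem pow_eq_one_of_pow_mul_pow_eq_one {x y : G} (hco : (orderOf x).Coprime (orderOf y))
    {a b : ℕ} (h : x ^ a * y ^ b = 1) : x ^ a = 1 := by
  have hdisj : Disjoint (Subgroup.zpowers x) (Subgroup.zpowers y) :=
    Subgroup.disjoint_of_coprime_natCard (by rwa [Nat.card_zpowers, Nat.card_zpowers])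
  refine Subgroup.disjoint_def.1 hdisj (Subgroup.npow_mem_zpowers x a) ?_
  rw [eq_inv_of_mul_eq_one_left h]
  exact inv_mem (Subgroup.npow_mem_zpowers y b)

theorem not_isProductOne_cons_replicate {x y : G} (hco : (orderOf x).Coprime (orderOf y))
    {a : ℕ} (ha : x ^ a ≠ 1) (b m : ℕ) :
    ¬ IsProductOne ((x ^ a * y ^ b) ::ₘ Multiset.replicate m y) := by
  rintro hP
  obtain ⟨l, hl, hprod⟩ := isProductOne_cons_iff.1 hP
  rw [Multiset.coe_eq_replicate_iff.1 hl, List.prod_replicate, mul_assoc, ← pow_add] at hprod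
  exact ha (pow_eq_one_of_pow_mul_pow_eq_one hco hprod)

end ProductOne

section Metacyclic

variable {G : Type*} [Group G] {x y : G} {p q s : ℕ}

theorem pow_mul_pow_of_mul_eq_mul_pow (hyx : y * x = x * y ^ s) (a b : ℕ) :
    y ^ b * x ^ a = x ^ a * y ^ (b * s ^ a) := by
  induction a generalizing b with
  | zero => simp
  | succ a ih =>
    have hstep : y ^ (b * s ^ a) * x = x * y ^ (b * s ^ (a + 1)) := by
      rw [Nat.pow_succ, ← mul_assoc, mul_comm (b * s ^ a) s, pow_mul y s]
      exact (SemiconjBy.pow_right (show SemiconjBy x (y ^ s) y from hyx.symm) _).symm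
    rw [pow_succ, ← mul_assoc, ih, mul_assoc, hstep, ← mul_assoc]

theorem mul_pow_mul_mul_pow_eq_pow (hyx : y * x = x * y ^ s) (hx : x ^ p = 1) (hp : p ≠ 0)
    (j c k : ℕ) :
    x * (y ^ j * ((x ^ (p - 1) * y ^ c) * y ^ k)) = y ^ (j * s ^ (p - 1) + c + k) := by
  calc x * (y ^ j * ((x ^ (p - 1) * y ^ c) * y ^ k))
      = x * (y ^ j * x ^ (p - 1)) * (y ^ c * y ^ k) := by simp only [mul_assoc]
    _ = x * x ^ (p - 1) * (y ^ (j * s ^ (p - 1)) * (y ^ c * y ^ k)) := by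
      rw [pow_mul_pow_of_mul_eq_mul_pow hyx]; simp only [mul_assoc]
    _ = x ^ p * (y ^ (j * s ^ (p - 1)) * (y ^ c * y ^ k)) := by
      rw [← pow_succ', Nat.sub_add_cancel (Nat.one_le_iff_ne_zero.2 hp)]
    _ = y ^ (j * s ^ (p - 1) + c + k) := by rw [hx, one_mul, ← pow_add, ← pow_add, add_assoc]

theorem isProductOne_cons_cons_replicate (hyx : y * x = x * y ^ s) (hx : x ^ p = 1)
    (hy : y ^ q = 1) (hp : p ≠ 0) (hq : q ≠ 0) :
    IsProductOne (x ::ₘ (x ^ (p - 1) * y ^ (s ^ (p - 1) + 1)) ::ₘ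
      Multiset.replicate (q - 1 + (q - 1)) y) := by
  refine isProductOne_cons_iff.2
    ⟨List.replicate (q - 1) y ++ (x ^ (p - 1) * y ^ (s ^ (p - 1) + 1)) :: List.replicate (q - 1) y,
      ?_, ?_⟩
  · rw [← Multiset.coe_add, ← Multiset.cons_coe, Multiset.coe_replicate,
      Multiset.add_cons, ← Multiset.replicate_add]
  · rw [List.prod_append, List.prod_cons, List.prod_replicate,
      mul_pow_mul_mul_pow_eq_pow hyx hx hp]
    obtain ⟨r, rfl⟩ : ∃ r, q = r + 1 := ⟨q - 1, by omega⟩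
    rw [Nat.add_sub_cancel, show r * s ^ (p - 1) + (s ^ (p - 1) + 1) + r
      = (r + 1) * (s ^ (p - 1) + 1) by ring, pow_mul, hy, one_pow]

theorem not_isProductOne_cons_cons_replicate (hq : q.Prime) (hyx : y * x = x * y ^ s)
    (hx : x ^ p = 1) (hp : p ≠ 0) (hoy : orderOf y = q) (hs : (s : ZMod q) ^ (p - 1) ≠ 1) :
    ¬ IsProductOne (x ::ₘ (x ^ (p - 1) * y ^ (s ^ (p - 1) + 1)) ::ₘ
      Multiset.replicate (q - 2) y) := by
  have := Fact.mk hq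
  have := hq.two_le
  rintro hP
  obtain ⟨l, hl, hprod⟩ := isProductOne_cons_iff.1 hP
  obtain ⟨j, k, hjk, rfl⟩ := List.exists_eq_replicate_append_cons_replicate hl
  rw [List.prod_append, List.prod_cons, List.prod_replicate, List.prod_replicate,
    mul_pow_mul_mul_pow_eq_pow hyx hx hp, ← orderOf_dvd_iff_pow_eq_one, hoy,
    ← ZMod.natCast_eq_zero_iff] at hprod
  have hjk' : ((j + 1 : ℕ) : ZMod q) + ((k + 1 : ℕ) : ZMod q) = 0 := by
    rw [← Nat.cast_add, ZMod.natCast_eq_zero_iff, show j + 1 + (k + 1) = q by omega]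
  have hzero : ((j + 1 : ℕ) : ZMod q) * ((s : ZMod q) ^ (p - 1) - 1) = 0 := by
    push_cast at hprod hjk' ⊢
    linear_combination hprod - hjk'
  rcases mul_eq_zero.1 hzero with h | h
  · have := Nat.le_of_dvd j.succ_pos ((ZMod.natCast_eq_zero_iff _ q).1 h)
    omega
  · exact hs (sub_eq_zero.1 h)

theorem isMinimalProductOne_cons_cons_replicate (hp : p.Prime) (hq : q.Prime) (hpq : p ≠ q)
    (hyx : y * x = x * y ^ s) (hox : orderOf x = p) (hoy : orderOf y = q)
    (hs : (s : ZMod q) ^ (p - 1) ≠ 1) :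
    IsMinimalProductOne (x ::ₘ (x ^ (p - 1) * y ^ (s ^ (p - 1) + 1)) ::ₘ
      Multiset.replicate (q - 1 + (q - 1)) y) := by
  have hx : x ^ p = 1 := hox ▸ pow_orderOf_eq_one x
  have hy : y ^ q = 1 := hoy ▸ pow_orderOf_eq_one y
  have hco : (orderOf x).Coprime (orderOf y) := hox ▸ hoy ▸ (Nat.coprime_primes hp hq).2 hpq
  have := hp.two_le
  refine ⟨Multiset.cons_ne_zero, isProductOne_cons_cons_replicate hyx hx hy hp.ne_zero
    hq.ne_zero, ?_⟩
  rintro ⟨T₁, T₂, h₁, h₂, hS, hP₁, hP₂⟩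
  have hyonly : ∀ {k₁ k₂ : ℕ}, k₁ + k₂ = q - 1 + (q - 1) → k₁ ≠ 0 →
      IsProductOne (Multiset.replicate k₁ y) →
      ¬ IsProductOne (x ::ₘ (x ^ (p - 1) * y ^ (s ^ (p - 1) + 1)) ::ₘ
        Multiset.replicate k₂ y) := by
    intro k₁ k₂ hk hk₁ hP
    have hq' : k₁ = q := Nat.eq_of_dvd_of_lt_two_mul hk₁
      (hoy ▸ orderOf_dvd_of_pow_eq_one (isProductOne_replicate_iff.1 hP)) (by omega)
    obtain rfl : k₂ = q - 2 := by omega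
    exact not_isProductOne_cons_cons_replicate hq hyx hx hp.ne_zero hoy hs
  obtain ⟨U₁, U₂, hU, hT⟩ := Multiset.exists_split_of_add_eq_cons hS.symm
  obtain ⟨V₁, V₂, hV, hU'⟩ := Multiset.exists_split_of_add_eq_cons hU
  obtain ⟨k₁, k₂, hk, rfl, rfl⟩ := Multiset.exists_eq_replicate_of_add_eq_replicate hV
  rcases hU' with ⟨rfl, rfl⟩ | ⟨rfl, rfl⟩ <;> rcases hT with ⟨rfl, rfl⟩ | ⟨rfl, rfl⟩
  · exact hyonly (by omega) (by rintro rfl; exact h₂ rfl) hP₂ hP₁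
  · exact not_isProductOne_cons_replicate hco
      (pow_ne_one_of_lt_orderOf (x := x) (n := p - 1) (by omega) (by omega)) _ _ hP₁
  · refine not_isProductOne_cons_replicate hco
      (pow_ne_one_of_lt_orderOf one_ne_zero (hox ▸ hp.one_lt)) 0 k₁ ?_
    rwa [pow_one, pow_zero, mul_one]
  · exact hyonly hk (by rintro rfl; exact h₁ rfl) hP₁ hP₂

end Metacyclic

theorem stmt1_general {G : Type*} [Group G] (p q s : ℕ) (hp : p.Prime) (hq : q.Prime)
    (hpq : p ∣ q - 1)
    (x y : G) (hx : x ^ p = 1) (hy : y ^ q = 1) (hyx : y * x = x * y ^ s)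
    (hs : orderOf ((s : ZMod q)) = p)
    (hgen : Subgroup.closure {x, y} = ⊤) (hcard : Nat.card G = p * q) :
    IsMinimalProductOne (Multiset.replicate (q - 1) y + {x} + Multiset.replicate (q - 1) y +
      {x ^ (p - 1) * y ^ (s ^ (p - 1) + 1)}) := by
  have := Fact.mk hp
  have := Fact.mk hq
  have hp2 := hp.two_le
  have hpltq : p < q := by have := Nat.le_of_dvd (by have := hq.two_le; omega) hpq; omega
  have hy1 : y ≠ 1 := by
    rintro rfl
    rw [Set.pair_comm, Subgroup.closure_insert_one, ← Subgroup.zpowers_eq_closure] at hgen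
    have hdvd : p * q ∣ p * 1 := by
      rw [mul_one, ← hcard, ← Subgroup.card_top, ← hgen, Nat.card_zpowers]
      exact orderOf_dvd_of_pow_eq_one hx
    exact hq.one_lt.ne' (Nat.dvd_one.1 (Nat.dvd_of_mul_dvd_mul_left hp.pos hdvd))
  have hoy : orderOf y = q := orderOf_eq_prime hy hy1
  have hx1 : x ≠ 1 := by
    rintro rfl
    rw [mul_one, one_mul] at hyx
    have hs1 : 1 ≡ s [MOD q] := hoy ▸ pow_eq_pow_iff_modEq.1 (by rwa [pow_one])
    rw [← (ZMod.natCast_eq_natCast_iff _ _ _).2 hs1, Nat.cast_one, orderOf_one] at hs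
    exact hp.ne_one hs.symm
  have hox : orderOf x = p := orderOf_eq_prime hx hx1
  have hτ : (s : ZMod q) ^ (p - 1) ≠ 1 := pow_ne_one_of_lt_orderOf (by omega) (by omega)
  convert isMinimalProductOne_cons_cons_replicate hp hq hpltq.ne hyx hox hoy hτ using 1
  rw [Multiset.replicate_add, ← Multiset.singleton_add, ← Multiset.singleton_add]
  abel

theorem stmt1 {G : Type*} [Group G] (p q s : ℕ) (hp : p.Prime) (hq : q.Prime)
    (hpodd : Odd p) (hqodd : Odd q) (hpq : p ∣ q - 1)
    (x y : G) (hx : x ^ p = 1) (hy : y ^ q = 1) (hyx : y * x = x * y ^ s)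
    (hs : orderOf ((s : ZMod q)) = p)
    (hgen : Subgroup.closure {x, y} = ⊤) (hcard : Nat.card G = p * q) :
    IsMinimalProductOne (Multiset.replicate (q - 1) y + {x} + Multiset.replicate (q - 1) y +
      {x ^ (p - 1) * y ^ (s ^ (p - 1) + 1)}) :=
  stmt1_general p q s hp hq hpq x y hx hy hyx hs hgen hcard
end

section
/- Let G be a finite group. The large Davenport constant D(G), defined as the supremum of lengths of minimal product-one sequences over G, satisfies D(G) ≤ |G|. -/
/-!
Among the `|G| + 1` prefix products of a sequence of length at least `|G|` two coincide, so some
nonempty block of consecutive terms of length at most `|G|` has product one. In a product-one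
sequence longer than `|G|` the rest is then nonempty and product-one as well, so the sequence is
not minimal.
-/

theorem List.exists_append_append_prod_eq_one {M : Type*} [LeftCancelMonoid M] [Finite M]
    (l : List M) (hl : Nat.card M ≤ l.length) :
    ∃ a b c : List M, l = a ++ b ++ c ∧ b ≠ [] ∧ b.length ≤ Nat.card M ∧ b.prod = 1 := by
  have hf : ¬ Function.Injective fun k : Fin (Nat.card M + 1) => (l.take k).prod := fun hinj => by
    simpa using Nat.card_le_card_of_injective _ hinj
  obtain ⟨i, j, hprefix, hne⟩ := Function.not_injective_iff.mp hf
  wlog hij : i < j generalizing i j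
  · exact this j i hprefix.symm hne.symm (lt_of_le_of_ne (not_lt.mp hij) hne.symm)
  have hi : (i : ℕ) < j := hij
  have hj : (j : ℕ) ≤ Nat.card M := Nat.lt_succ_iff.mp j.isLt
  have htake : l.take j = l.take i ++ (l.drop i).take (j - i) := by
    rw [← List.take_add, Nat.add_sub_cancel' hi.le]
  have hlen : ((l.drop i).take (j - i)).length = j - i := by
    simp only [List.length_take, List.length_drop]
    omega
  refine ⟨l.take i, (l.drop i).take (j - i), l.drop j, ?_, ?_, by omega, ?_⟩
  · rw [← htake, List.take_append_drop]
  · rw [← List.length_pos_iff, hlen]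
    omega
  · have : (l.take i).prod * ((l.drop i).take (j - i)).prod = (l.take i).prod := by
      rw [← List.prod_append, ← htake]
      exact hprefix.symm
    exact mul_eq_left.mp this

theorem IsProductOne.exists_split_of_card_lt {G : Type*} [Group G] [Finite G] {S : Multiset G}
    (hS : IsProductOne S) (hcard : Nat.card G < Multiset.card S) :
    ∃ T₁ T₂ : Multiset G, T₁ ≠ 0 ∧ T₂ ≠ 0 ∧ S = T₁ + T₂ ∧ IsProductOne T₁ ∧ IsProductOne T₂ := by
  obtain ⟨l, rfl, hprod⟩ := hS
  rw [Multiset.coe_card] at hcard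
  obtain ⟨a, b, c, rfl, hb, hblen, hbprod⟩ := l.exists_append_append_prod_eq_one hcard.le
  have hac : a ++ c ≠ [] := by
    intro h
    simp only [List.append_eq_nil_iff] at h
    simp only [h, List.append_nil, List.nil_append] at hcard
    omega
  refine ⟨b, a ++ c, by simpa using hb, by simpa using hac, ?_, ⟨b, rfl, hbprod⟩, ⟨a ++ c, rfl, ?_⟩⟩
  · simp only [← Multiset.coe_add]
    abel
  · simpa [List.prod_append, hbprod] using hprod

theorem stmt5 {G : Type*} [Group G] [Finite G] (S : Multiset G)
    (hS : IsMinimalProductOne S) : Multiset.card S ≤ Nat.card G := by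
  by_contra! hcard
  exact hS.2.2 (hS.2.1.exists_split_of_card_lt hcard)
end

section
/- Let p, q be odd primes with p | q−1, let G = C_q ⋊ C_p be the non-abelian group of order pq with commutator subgroup G′. Let S be a sequence over G′ \ {1} and let g₁, g₂ ∈ G \ G′ with g₁g₂ ∉ G′. Then |π(g₁·g₂·S)| ≥ min{q, 2|S| + 1}. -/
open Pointwise

open Pointwise

open scoped commutatorElement

lemma cd_iter {q : ℕ} (hq : q.Prime) (F : Multiset (Finset (ZMod q)))
    (hF : ∀ A ∈ F, A.card = 3) :
    F.sum.Nonempty ∧ min q (2 * Multiset.card F + 1) ≤ F.sum.card := by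
  induction F using Multiset.induction with
  | empty =>
      simp only [Multiset.sum_zero, Multiset.card_zero]
      constructor
      · exact ⟨0, by simp [Finset.mem_zero]⟩
      · have : (0 : Finset (ZMod q)).card = 1 := by simp
        omega
  | cons a F ih =>
      have hA : a.card = 3 := hF a (Multiset.mem_cons_self a F)
      obtain ⟨hne, hcard⟩ := ih (fun A hA => hF A (Multiset.mem_cons_of_mem hA))
      have haNe : a.Nonempty := Finset.card_pos.mp (by omega)
      have hCD := ZMod.cauchy_davenport hq haNe hne
      rw [Multiset.sum_cons, Multiset.card_cons]
      refine ⟨haNe.add hne, ?_⟩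
      rw [hA] at hCD
      omega

section
variable {G : Type*} [Group G] {q : ℕ} [NeZero q] {α : G}

lemma psi_natCast (hord : orderOf α = q) (n : ℕ) : α ^ ((n : ZMod q)).val = α ^ n := by
  rw [ZMod.val_natCast, ← hord, pow_mod_orderOf]

lemma psi_add (hord : orderOf α = q) (x y : ZMod q) :
    α ^ (x + y).val = α ^ x.val * α ^ y.val := by
  have h : ((x.val + y.val : ℕ) : ZMod q) = x + y := by push_cast [ZMod.natCast_val, ZMod.cast_id]; ring
  rw [← h, psi_natCast hord, pow_add]

lemma psi_mul (hord : orderOf α = q) (x y : ZMod q) :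
    α ^ (x * y).val = (α ^ x.val) ^ y.val := by
  have h : ((x.val * y.val : ℕ) : ZMod q) = x * y := by push_cast [ZMod.natCast_val, ZMod.cast_id]; ring
  rw [← h, psi_natCast hord, pow_mul]

lemma psi_inj (hord : orderOf α = q) {x y : ZMod q} (h : α ^ x.val = α ^ y.val) : x = y := by
  rw [pow_eq_pow_iff_modEq, hord] at h
  have hx := ZMod.val_lt x
  have hy := ZMod.val_lt y
  have := (Nat.ModEq.eq_of_lt_of_lt h hx hy)
  exact ZMod.val_injective _ this
end

lemma quot_comm {H : Type*} [Group H] [IsCyclic H] (a b : H) :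
    a * b = b * a := by
  obtain ⟨g, hg⟩ := IsCyclic.exists_generator (α := H)
  obtain ⟨m, rfl⟩ := hg a
  obtain ⟨n, rfl⟩ := hg b
  exact zpow_mul_comm g m n

lemma keysetup {G : Type*} [Group G] [Finite G] (p q : ℕ) (hp : p.Prime) (hq : q.Prime)
    (hpq : p ∣ q - 1) (hcard : Nat.card G = p * q) (hna : ¬ ∀ a b : G, a * b = b * a) :
    ∃ α : G, orderOf α = q ∧ (Subgroup.zpowers α : Subgroup G) = commutator G ∧
      ∀ g : G, g ∉ commutator G → g⁻¹ * α * g ≠ α := by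
  haveI : Fact p.Prime := ⟨hp⟩
  haveI : Fact q.Prime := ⟨hq⟩
  have hq2 : 2 ≤ q := hq.two_le
  have hp1 : 1 < p := hp.one_lt
  have hplt : p < q := by
    have := Nat.le_of_dvd (by omega) hpq
    omega
  have hpne : p ≠ q := hplt.ne
  -- Sylow q-subgroup
  obtain ⟨Q⟩ : Nonempty (Sylow q G) := inferInstance
  have hQcard : Nat.card (Q : Subgroup G) = q := by
    show Nat.card Q = q
    rw [Sylow.card_eq_multiplicity, hcard]
    rw [Nat.factorization_mul hp.pos.ne' hq.pos.ne']
    simp [hp.factorization, hq.factorization, Finsupp.single_apply, hpne, pow_succ]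
  have hQindex : (Q : Subgroup G).index = p := by
    have h := Subgroup.card_mul_index (Q : Subgroup G)
    rw [hQcard, hcard] at h
    have h2 : q * (Q : Subgroup G).index = q * p := by rw [h]; ring
    exact Nat.eq_of_mul_eq_mul_left (by omega) h2
  have hSylCard : Nat.card (Sylow q G) = 1 := by
    have h1 := Sylow.card_dvd_index Q
    rw [hQindex] at h1
    have h2 := card_sylow_modEq_one q G
    rcases (Nat.Prime.eq_one_or_self_of_dvd hp _ h1) with h | h
    · exact h
    · exfalso
      rw [h] at h2
      have h3 : q ∣ p - 1 := (Nat.modEq_iff_dvd' (by omega)).mp h2.symm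
      have h4 : p - 1 = 0 := Nat.eq_zero_of_dvd_of_lt h3 (by omega)
      omega
  haveI hQnormal : (Q : Subgroup G).Normal := by
    haveI : Subsingleton (Sylow q G) := (Nat.card_eq_one_iff_unique.mp hSylCard).1
    rw [← Subgroup.normalizer_eq_top_iff, Subgroup.eq_top_iff']
    intro g
    refine (Sylow.smul_eq_iff_mem_normalizer (P := Q)).mp ?_
    exact Subsingleton.elim _ _
  -- commutator = Q
  have hQuotCard : Nat.card (G ⧸ (Q : Subgroup G)) = p := by
    rw [← hQindex]; rfl
  haveI : IsCyclic (G ⧸ (Q : Subgroup G)) := isCyclic_of_prime_card hQuotCard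
  have hcommQ : commutator G = (Q : Subgroup G) := by
    have hle : commutator G ≤ (Q : Subgroup G) := by
      rw [commutator_def, Subgroup.commutator_le]
      intro g _ h _
      rw [← QuotientGroup.eq_one_iff]
      have : ((⁅g, h⁆ : G) : G ⧸ (Q : Subgroup G))
          = ⁅(g : G ⧸ (Q : Subgroup G)), (h : G ⧸ (Q : Subgroup G))⁆ := by
        simp [commutatorElement_def]
      rw [this, commutatorElement_eq_one_iff_commute]
      exact quot_comm (H := G ⧸ (Q : Subgroup G)) _ _
    have hne : commutator G ≠ ⊥ := by
      intro h
      apply hna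
      intro a b
      have h2 := Subgroup.commutator_eq_bot_iff_le_centralizer.mp h
      exact (Subgroup.mem_centralizer_iff.mp (h2 (Subgroup.mem_top a)) b (Subgroup.mem_top b)).symm
    have hdvd : Nat.card (commutator G) ∣ q := by
      rw [← hQcard]
      exact Subgroup.card_dvd_of_le hle
    rcases (Nat.Prime.eq_one_or_self_of_dvd hq _ hdvd) with h | h
    · exact absurd (Subgroup.card_eq_one.mp h) hne
    · exact Subgroup.eq_of_le_of_card_ge hle (by rw [h, hQcard])
  -- generator of Q
  have hnontriv : Nontrivial (Q : Subgroup G) := by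
    rw [← Finite.one_lt_card_iff_nontrivial, hQcard]; omega
  obtain ⟨a, ha⟩ := exists_ne (1 : (Q : Subgroup G))
  have hαne : (a : G) ≠ 1 := fun h => ha (OneMemClass.coe_eq_one.mp h)
  have hordQ : orderOf (a : G) ∣ q := by
    rw [Subgroup.orderOf_coe]
    have h := orderOf_dvd_natCard a
    rwa [hQcard] at h
  have hord : orderOf (a : G) = q := by
    rcases (Nat.Prime.eq_one_or_self_of_dvd hq _ hordQ) with h | h
    · exact absurd (orderOf_eq_one_iff.mp h) hαne
    · exact h
  have hzpow : Subgroup.zpowers (a : G) = (Q : Subgroup G) := by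
    apply Subgroup.eq_of_le_of_card_ge (Subgroup.zpowers_le.mpr a.2)
    rw [hQcard, Nat.card_zpowers, hord]
  refine ⟨a, hord, by rw [hzpow, hcommQ], ?_⟩
  -- centralizer
  intro g hg hcomm
  rw [hcommQ] at hg
  have hgα : g * (a : G) = (a : G) * g := by
    have := congrArg (fun x => g * x) hcomm
    simpa [mul_assoc] using this.symm
  set C := Subgroup.centralizer {(a : G)} with hC
  have hαC : Subgroup.zpowers (a : G) ≤ C := by
    rw [Subgroup.zpowers_le]
    rw [Subgroup.mem_centralizer_iff]
    rintro h rfl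
    rfl
  have hQC : (Q : Subgroup G) ≤ C := hzpow ▸ hαC
  have hgC : g ∈ C := by
    rw [Subgroup.mem_centralizer_iff]
    rintro h rfl
    exact hgα.symm
  have hCneQ : C ≠ (Q : Subgroup G) := fun h => hg (h ▸ hgC)
  have hqdvdC : q ∣ Nat.card C := by
    rw [← hQcard]
    exact Subgroup.card_dvd_of_le hQC
  have hCdvd : Nat.card C ∣ p * q := by
    rw [← hcard]
    exact Subgroup.card_subgroup_dvd_card C
  obtain ⟨t, ht⟩ := hqdvdC
  have htp : t ∣ p := by
    have : q * t ∣ q * p := by rw [← ht]; rw [mul_comm p q] at hCdvd; exact hCdvd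
    exact (mul_dvd_mul_iff_left (by omega : q ≠ 0)).mp this
  have hCtop : C = ⊤ := by
    rcases hp.eq_one_or_self_of_dvd _ htp with h | h
    · exfalso
      apply hCneQ
      apply le_antisymm _ hQC
      have : Nat.card C ≤ Nat.card (Q : Subgroup G) := by rw [hQcard, ht, h]; omega
      intro x hx
      have := Subgroup.eq_of_le_of_card_ge hQC this
      rw [this]; exact hx
    · apply Subgroup.eq_top_of_card_eq
      rw [hcard, ht, h]; ring
  -- α central → G commutative, contradiction
  have hαZ : Subgroup.zpowers (a : G) ≤ Subgroup.center G := by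
    rw [Subgroup.zpowers_le, Subgroup.mem_center_iff]
    intro b
    have hb : b ∈ C := hCtop ▸ Subgroup.mem_top b
    exact (Subgroup.mem_centralizer_iff.mp hb _ rfl).symm
  have hZindex : (Subgroup.center G).index ∣ p := by
    rw [← hQindex, ← hzpow]
    exact Subgroup.index_dvd_of_le hαZ
  haveI : IsCyclic (G ⧸ Subgroup.center G) := by
    rcases hp.eq_one_or_self_of_dvd _ hZindex with h | h
    · haveI : Subsingleton (G ⧸ Subgroup.center G) :=
        (Nat.card_eq_one_iff_unique.mp (by rw [← h]; rfl)).1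
      infer_instance
    · exact isCyclic_of_prime_card (p := p) (by rw [← h]; rfl)
  exact hna (commutative_of_cyclic_center_quotient (QuotientGroup.mk' (Subgroup.center G))
    (le_of_eq (QuotientGroup.ker_mk' _)))




set_option maxHeartbeats 2000000 in
theorem stmt8 {G : Type*} [Group G] [Finite G] (p q : ℕ) (hp : p.Prime) (hq : q.Prime)
    (hpodd : Odd p) (hqodd : Odd q) (hpq : p ∣ q - 1)
    (hcard : Nat.card G = p * q) (hna : ¬ ∀ a b : G, a * b = b * a)
    (S : Multiset G) (hS : ∀ a ∈ S, a ∈ commutator G ∧ a ≠ (1 : G))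
    (g₁ g₂ : G) (hg₁ : g₁ ∉ commutator G) (hg₂ : g₂ ∉ commutator G)
    (hg₁g₂ : g₁ * g₂ ∉ commutator G) :
    min q (2 * Multiset.card S + 1) ≤ (prodSet (g₁ ::ₘ g₂ ::ₘ S)).ncard := by
  haveI : Fact q.Prime := ⟨hq⟩
  haveI : NeZero q := ⟨hq.pos.ne'⟩
  have hq2 : 2 ≤ q := hq.two_le
  obtain ⟨α, hord, hzpow, hcent⟩ := keysetup p q hp hq hpq hcard hna
  have hαcomm : α ∈ commutator G := hzpow ▸ Subgroup.mem_zpowers α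
  -- discrete log
  have hmem : ∀ a : G, a ∈ commutator G → ∃ x : ZMod q, α ^ x.val = a := by
    intro a ha
    rw [← hzpow] at ha
    obtain ⟨n, hn⟩ := mem_powers_iff_mem_zpowers.mpr ha
    exact ⟨(n : ZMod q), by rw [psi_natCast hord]; exact hn⟩
  classical
  set dl : G → ZMod q := fun a =>
    if h : ∃ x : ZMod q, α ^ x.val = a then h.choose else 0 with hdl
  have hdl_spec : ∀ a : G, a ∈ commutator G → α ^ (dl a).val = a := by
    intro a ha
    have h := hmem a ha
    simp only [hdl, dif_pos h]
    exact h.choose_spec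
  have hdl_ne : ∀ a : G, a ∈ commutator G → a ≠ 1 → dl a ≠ 0 := by
    intro a ha hne h0
    apply hne
    rw [← hdl_spec a ha, h0]
    simp [ZMod.val_zero]
  -- conjugation weights
  haveI : (commutator G).Normal := by unfold commutator; infer_instance
  have hw : ∀ g : G, ∃ w : ZMod q, α ^ w.val = g⁻¹ * α * g :=
    fun g => hmem _ (Subgroup.Normal.conj_mem' ‹(commutator G).Normal› α hαcomm g)
  obtain ⟨w₁, hw₁⟩ := hw g₁
  obtain ⟨w₂, hw₂⟩ := hw g₂
  -- conjugation formula
  have hcp : ∀ (g : G) (n : ℕ), (g⁻¹ * α * g) ^ n = g⁻¹ * α ^ n * g := by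
    intro g n
    induction n with
    | zero => simp
    | succ n ih => rw [pow_succ, pow_succ, ih]; group
  have hconj : ∀ (g : G) (w : ZMod q), α ^ w.val = g⁻¹ * α * g →
      ∀ x : ZMod q, α ^ x.val * g = g * α ^ (x * w).val := by
    intro g w hg x
    rw [mul_comm x w, psi_mul hord w x, hg, hcp g]
    group
  have hc₁ := hconj g₁ w₁ hw₁
  have hc₂ := hconj g₂ w₂ hw₂
  -- weight of g₁ * g₂
  have hw₁₂ : α ^ ((w₁ * w₂)).val = (g₁ * g₂)⁻¹ * α * (g₁ * g₂) := by
    rw [mul_comm w₁ w₂, psi_mul hord w₂ w₁, hw₂, hcp g₂, hw₁]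
    group
  -- weights nonzero / not one
  have hwne1 : ∀ (g : G) (w : ZMod q), α ^ w.val = g⁻¹ * α * g → g ∉ commutator G → w ≠ 1 := by
    intro g w hgw hg h1
    apply hcent g hg
    rw [← hgw, h1, ZMod.val_one, pow_one]
  have hwne0 : ∀ (g : G) (w : ZMod q), α ^ w.val = g⁻¹ * α * g → w ≠ 0 := by
    intro g w hgw h0
    rw [h0] at hgw
    simp [ZMod.val_zero] at hgw
    have : α = 1 := by
      have := congrArg (fun x => g * x * g⁻¹) hgw
      simpa [mul_assoc] using this.symm
    rw [this] at hord
    simp at hord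
    omega
  have hw₂ne1 : w₂ ≠ 1 := hwne1 g₂ w₂ hw₂ hg₂
  have hw₂ne0 : w₂ ≠ 0 := hwne0 g₂ w₂ hw₂
  have hw₁₂ne1 : w₁ * w₂ ≠ 1 := hwne1 (g₁ * g₂) (w₁ * w₂) hw₁₂ hg₁g₂
  have hw₁₂ne0 : w₁ * w₂ ≠ 0 := hwne0 (g₁ * g₂) (w₁ * w₂) hw₁₂
  have hw₁₂new₂ : w₁ * w₂ ≠ w₂ := by
    intro h
    apply hwne1 g₁ w₁ hw₁ hg₁
    have := mul_right_cancel₀ hw₂ne0 (h.trans (one_mul w₂).symm)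
    exact this
  -- the finsets
  set f : G → Finset (ZMod q) :=
    fun a => ({dl a * (w₁ * w₂), dl a * w₂, dl a} : Finset (ZMod q)) with hf
  have hf3 : ∀ A ∈ S.map f, A.card = 3 := by
    intro A hA
    obtain ⟨a, haS, rfl⟩ := Multiset.mem_map.mp hA
    obtain ⟨hac, hane⟩ := hS a haS
    have hx0 : dl a ≠ 0 := hdl_ne a hac hane
    simp only [hf]
    rw [Finset.card_insert_of_notMem, Finset.card_insert_of_notMem, Finset.card_singleton]
    · simp only [Finset.mem_singleton]
      intro h
      exact hw₂ne1 (mul_left_cancel₀ hx0 (h.trans (mul_one (dl a)).symm))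
    · simp only [Finset.mem_insert, Finset.mem_singleton]
      push_neg
      constructor
      · intro h
        exact hw₁₂new₂ (mul_left_cancel₀ hx0 h)
      · intro h
        exact hw₁₂ne1 (mul_left_cancel₀ hx0 (h.trans (mul_one (dl a)).symm))
  -- Cauchy-Davenport
  obtain ⟨hTne, hTcard⟩ := cd_iter hq (S.map f) hf3
  rw [Multiset.card_map] at hTcard
  set T := (S.map f).sum with hT
  -- list product formula
  have listprod : ∀ A : List G, (∀ a ∈ A, α ^ (dl a).val = a) →
      A.prod = α ^ ((A.map dl).sum).val := by
    intro A
    induction A with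
    | nil => intro _; simp [ZMod.val_zero]
    | cons a A ih =>
        intro h
        rw [List.prod_cons, List.map_cons, List.sum_cons, psi_add hord,
          ih (fun b hb => h b (List.mem_cons_of_mem a hb)), h a List.mem_cons_self]
  -- main product formula
  have prodform : ∀ u v x : ZMod q,
      α ^ u.val * g₁ * (α ^ v.val) * g₂ * α ^ x.val
        = g₁ * g₂ * α ^ (u * (w₁ * w₂) + v * w₂ + x).val := by
    intro u v x
    rw [hc₁ u]
    rw [mul_assoc g₁, ← psi_add hord]
    rw [mul_assoc g₁, hc₂ (u * w₁ + v)]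
    rw [mul_assoc g₁, mul_assoc g₂, ← psi_add hord, ← mul_assoc]
    congr 2
    ring
  -- decomposition existence
  have key : ∀ S' : Multiset G, (∀ a ∈ S', α ^ (dl a).val = a) →
      ∀ x ∈ (S'.map f).sum, ∃ A B C : List G,
        ((A : Multiset G) + (B : Multiset G) + (C : Multiset G) = S') ∧
        (∀ a ∈ A ++ B ++ C, α ^ (dl a).val = a) ∧
        ((A.map dl).sum * (w₁ * w₂) + (B.map dl).sum * w₂ + (C.map dl).sum = x) := by
    intro S'
    induction S' using Multiset.induction with
    | empty =>
        intro _ x hx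
        refine ⟨[], [], [], by simp, by simp, ?_⟩
        simp only [Multiset.map_zero, Multiset.sum_zero] at hx
        rw [Finset.mem_zero] at hx
        rw [hx]
        simp
    | cons a S' ih =>
        intro hmem' x hx
        rw [Multiset.map_cons, Multiset.sum_cons] at hx
        rw [Finset.mem_add] at hx
        obtain ⟨u, hu, v, hv, rfl⟩ := hx
        obtain ⟨A, B, C, hsum, hABC, hval⟩ :=
          ih (fun b hb => hmem' b (Multiset.mem_cons_of_mem hb)) v hv
        have haS : α ^ (dl a).val = a := hmem' a (Multiset.mem_cons_self a S')
        simp only [hf, Finset.mem_insert, Finset.mem_singleton] at hu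
        rcases hu with rfl | rfl | rfl
        · refine ⟨a :: A, B, C, ?_, ?_, ?_⟩
          · rw [← Multiset.cons_coe, Multiset.cons_add, Multiset.cons_add, hsum]
          · intro b hb
            simp only [List.mem_append, List.mem_cons] at hb
            have hb' : b = a ∨ b ∈ A ++ B ++ C := by
              simp only [List.mem_append]; tauto
            rcases hb' with rfl | hb'
            · exact haS
            · exact hABC b hb'
          · rw [List.map_cons, List.sum_cons, ← hval]; ring
        · refine ⟨A, a :: B, C, ?_, ?_, ?_⟩
          · rw [← Multiset.cons_coe, Multiset.add_cons, Multiset.cons_add, hsum]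
          · intro b hb
            simp only [List.mem_append, List.mem_cons] at hb
            have hb' : b = a ∨ b ∈ A ++ B ++ C := by
              simp only [List.mem_append]; tauto
            rcases hb' with rfl | hb'
            · exact haS
            · exact hABC b hb'
          · rw [List.map_cons, List.sum_cons, ← hval]; ring
        · refine ⟨A, B, a :: C, ?_, ?_, ?_⟩
          · rw [← Multiset.cons_coe, Multiset.add_cons, hsum]
          · intro b hb
            simp only [List.mem_append, List.mem_cons] at hb
            have hb' : b = a ∨ b ∈ A ++ B ++ C := by
              simp only [List.mem_append]; tauto
            rcases hb' with rfl | hb'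
            · exact haS
            · exact hABC b hb'
          · rw [List.map_cons, List.sum_cons, ← hval]; ring
  -- membership in prodSet
  have hsub : ∀ x ∈ T, g₁ * g₂ * α ^ x.val ∈ prodSet (g₁ ::ₘ g₂ ::ₘ S) := by
    intro x hx
    obtain ⟨A, B, C, hsum, hABC, hval⟩ :=
      key S (fun a ha => hdl_spec a (hS a ha).1) x hx
    refine ⟨A ++ g₁ :: (B ++ g₂ :: C), ?_, ?_⟩
    · rw [← hsum]
      simp only [← Multiset.coe_add, ← Multiset.cons_coe, ← Multiset.singleton_add]
      abel
    · rw [List.prod_append, List.prod_cons, List.prod_append, List.prod_cons]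
      have hA := listprod A (fun a ha => hABC a (by simp [ha]))
      have hB := listprod B (fun a ha => hABC a (by simp [ha]))
      have hC := listprod C (fun a ha => hABC a (by simp [ha]))
      rw [hA, hB, hC, ← hval]
      rw [← prodform]
      group
  -- final counting
  have hinj : Function.Injective (fun x : ZMod q => g₁ * g₂ * α ^ x.val) := by
    intro x y h
    simp only [mul_right_inj] at h
    exact psi_inj hord h
  calc min q (2 * Multiset.card S + 1) ≤ T.card := hTcard
    _ = (T.image (fun x => g₁ * g₂ * α ^ x.val)).card :=
        (Finset.card_image_of_injective T hinj).symm
    _ = ((T.image (fun x => g₁ * g₂ * α ^ x.val) : Finset G) : Set G).ncard :=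
        (Set.ncard_coe_finset _).symm
    _ ≤ (prodSet (g₁ ::ₘ g₂ ::ₘ S)).ncard := by
        apply Set.ncard_le_ncard _ (Set.toFinite _)
        intro y hy
        simp only [Finset.coe_image, Set.mem_image, Finset.mem_coe] at hy
        obtain ⟨x, hx, rfl⟩ := hy
        exact hsub x hx
end

section
/- Let p, q be odd primes with p | q−1 and let G = C_q ⋊ C_p be the non-abelian group of order pq. If S is a sequence over G \ {1} whose support generates G, then |π(S)| ≥ min{p, |S|}. -/
/-! ### Auxiliary lemmas -/

lemma Stmt9.divisors_pq {p q d : ℕ} (hp : p.Prime) (hq : q.Prime) (hne : p ≠ q) (hd : d ∣ p * q) :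
    d = 1 ∨ d = p ∨ d = q ∨ d = p * q := by
  by_cases hpd : p ∣ d
  · obtain ⟨e, rfl⟩ := hpd
    have he : e ∣ q := (mul_dvd_mul_iff_left hp.pos.ne').mp hd
    rcases (Nat.Prime.eq_one_or_self_of_dvd hq e he) with h | h <;> subst h <;> simp
  · have hco : Nat.Coprime p d := hp.coprime_iff_not_dvd.mpr hpd
    have : d ∣ q := (Nat.Coprime.dvd_of_dvd_mul_left hco.symm hd)
    rcases (Nat.Prime.eq_one_or_self_of_dvd hq d this) with h | h <;> simp [h]

namespace Stmt9

variable {G : Type*} [Group G] [Finite G] {p q : ℕ}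

lemma center_eq_bot (hp : p.Prime) (hq : q.Prime)
    (hne : p ≠ q) (hcard : Nat.card G = p * q) (hna : ¬ ∀ a b : G, a * b = b * a) :
    Subgroup.center G = ⊥ := by
  by_contra hbot
  have hdvd : Nat.card (Subgroup.center G) ∣ p * q :=
    hcard ▸ (Subgroup.center G).card_subgroup_dvd_card
  have hcm : Nat.card (Subgroup.center G) * (Subgroup.center G).index = p * q := by
    rw [Subgroup.card_mul_index, hcard]
  have h1 : 1 < Nat.card (Subgroup.center G) := by
    rcases Nat.lt_or_ge (Nat.card (Subgroup.center G)) 2 with h | h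
    · interval_cases h' : Nat.card (Subgroup.center G)
      · exact absurd (Nat.card_pos (α := Subgroup.center G)).ne' (by omega)
      · exact absurd ((Subgroup.center G).card_le_one_iff_eq_bot.mp (by omega)) hbot
    · omega
  have hidx : Nat.card (G ⧸ Subgroup.center G) = (Subgroup.center G).index := by
    rw [Subgroup.index_eq_card]
  have hcyc : IsCyclic (G ⧸ Subgroup.center G) := by
    have hdl : (Subgroup.center G).index ∣ p * q := Dvd.intro_left _ hcm
    rcases Stmt9.divisors_pq hp hq hne hdl with h | h | h | h
    · have h2 : Nat.card (G ⧸ Subgroup.center G) = 1 := by rw [hidx, h]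
      have := (Nat.card_eq_one_iff_unique.mp h2).1
      infer_instance
    · haveI := Fact.mk hp
      exact isCyclic_of_prime_card (hidx.trans h)
    · haveI := Fact.mk hq
      exact isCyclic_of_prime_card (hidx.trans h)
    · exfalso
      have h3 := hcm
      rw [h] at h3
      nlinarith [hp.two_le, hq.two_le]
  exact hna (commutative_of_cyclic_center_quotient (QuotientGroup.mk' (Subgroup.center G))
    (by rw [QuotientGroup.ker_mk']))

lemma exists_normal_q (hp : p.Prime) (hq : q.Prime) (hlt : p < q)
    (hcard : Nat.card G = p * q) :
    ∃ N : Subgroup G, N.Normal ∧ Nat.card N = q := by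
  haveI := Fact.mk hq
  obtain ⟨P⟩ : Nonempty (Sylow q G) := inferInstance
  have hfac : (Nat.card G).factorization q = 1 := by
    rw [hcard, Nat.factorization_mul hp.pos.ne' hq.pos.ne', hp.factorization, hq.factorization]
    simp [Finsupp.single_apply, hlt.ne]
  have hPcard : Nat.card P = q := by
    rw [Sylow.card_eq_multiplicity, hfac, pow_one]
  have hPidx : (P : Subgroup G).index = p := by
    have h := Subgroup.card_mul_index (P : Subgroup G)
    rw [hcard] at h
    have h' : Nat.card (P : Subgroup G) = q := hPcard
    rw [h'] at h
    have hq0 : 0 < q := hq.pos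
    nlinarith [h]
  have hdvd : Nat.card (Sylow q G) ∣ p := hPidx ▸ Sylow.card_dvd_index P
  have hmod : Nat.card (Sylow q G) ≡ 1 [MOD q] := card_sylow_modEq_one q G
  have hone : Nat.card (Sylow q G) = 1 := by
    rcases (Nat.Prime.eq_one_or_self_of_dvd hp _ hdvd) with h | h
    · exact h
    · exfalso
      have h2 := hmod
      rw [h] at h2
      have h1 : p % q = 1 % q := h2
      rw [Nat.mod_eq_of_lt hlt, Nat.mod_eq_of_lt hq.one_lt] at h1
      exact hp.one_lt.ne' h1
  have hidx1 : (Subgroup.normalizer (P : Set G)).index = 1 := by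
    rw [← Sylow.card_eq_index_normalizer]; exact hone
  exact ⟨P, Subgroup.normalizer_eq_top_iff.mp (Subgroup.index_eq_one.mp hidx1), hPcard⟩

lemma zpowers_eq_N (hq : q.Prime) {N : Subgroup G} (hNq : Nat.card N = q) {z : G}
    (hz : z ∈ N) (hz1 : z ≠ 1) : Subgroup.zpowers z = N := by
  have hle : Subgroup.zpowers z ≤ N := Subgroup.zpowers_le.mpr hz
  have hdvd : Nat.card (Subgroup.zpowers z) ∣ q := hNq ▸ Subgroup.card_dvd_of_le hle
  have hord : Nat.card (Subgroup.zpowers z) = q := by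
    rw [Nat.card_zpowers] at hdvd ⊢
    rcases (Nat.Prime.eq_one_or_self_of_dvd hq _ hdvd) with h | h
    · exact absurd (orderOf_eq_one_iff.mp h) hz1
    · exact h
  exact Subgroup.eq_of_le_of_card_ge hle (by rw [hord, hNq])

lemma top_of_gt_N (hp : p.Prime) (hq : q.Prime) (hlt : p < q) (hcard : Nat.card G = p * q)
    {N : Subgroup G} (hNq : Nat.card N = q) {H : Subgroup G} (hle : N ≤ H) {x : G}
    (hxH : x ∈ H) (hxN : x ∉ N) : H = ⊤ := by
  have hdvd : Nat.card H ∣ p * q := hcard ▸ H.card_subgroup_dvd_card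
  have hqd : q ∣ Nat.card H := hNq ▸ Subgroup.card_dvd_of_le hle
  have hne : p ≠ q := hlt.ne
  rcases Stmt9.divisors_pq hp hq hne hdvd with h | h | h | h
  · exfalso; rw [h] at hqd; exact hq.one_lt.ne' (Nat.eq_one_of_dvd_one hqd)
  · exfalso
    rw [h] at hqd
    exact absurd ((Nat.prime_dvd_prime_iff_eq hq hp).mp hqd) hne.symm
  · exfalso
    have h2 : N = H := Subgroup.eq_of_le_of_card_ge hle (by rw [h, hNq])
    exact hxN (h2 ▸ hxH)
  · exact Subgroup.eq_top_of_card_eq H (by rw [h, hcard])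

/-- An element of `N \ {1}` commutes with no element outside `N`. -/
lemma cen_lemma (hp : p.Prime) (hq : q.Prime) (hlt : p < q) (hcard : Nat.card G = p * q)
    (hna : ¬ ∀ a b : G, a * b = b * a) {N : Subgroup G} (hNq : Nat.card N = q) {z x : G}
    (hz : z ∈ N) (hz1 : z ≠ 1) (hx : x ∉ N) (hc : Commute x z) : False := by
  set C := Subgroup.centralizer {z} with hC
  have hNle : N ≤ C := by
    rw [← zpowers_eq_N hq hNq hz hz1]
    rw [Subgroup.zpowers_le]
    exact Subgroup.mem_centralizer_iff.mpr (by rintro y rfl; rfl)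
  have hxC : x ∈ C := Subgroup.mem_centralizer_iff.mpr
    (by rintro y rfl; exact hc.symm.eq)
  have htop : C = ⊤ := top_of_gt_N hp hq hlt hcard hNq hNle hxC hx
  have hzc : z ∈ Subgroup.center G := by
    rw [Subgroup.mem_center_iff]
    intro g
    have hg : g ∈ C := htop ▸ Subgroup.mem_top g
    exact (Subgroup.mem_centralizer_iff.mp hg z rfl).symm
  rw [center_eq_bot hp hq hlt.ne hcard hna, Subgroup.mem_bot] at hzc
  exact hz1 hzc

lemma card_quot {N : Subgroup G} (hq : q.Prime) (hcard : Nat.card G = p * q)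
    (hNq : Nat.card N = q) : Nat.card (G ⧸ N) = p := by
  have h := Subgroup.card_mul_index N
  rw [hNq, hcard, Subgroup.index_eq_card] at h
  have hq0 : 0 < q := hq.pos
  nlinarith [h]

lemma orderOf_ne_pq (hcard : Nat.card G = p * q) (hna : ¬ ∀ a b : G, a * b = b * a)
    (u : G) : orderOf u ≠ p * q := by
  intro h
  apply hna
  intro a b
  have htop : Subgroup.zpowers u = ⊤ := by
    apply Subgroup.eq_top_of_card_eq
    rw [Nat.card_zpowers, h, hcard]
  have ha : a ∈ Subgroup.zpowers u := htop ▸ Subgroup.mem_top a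
  have hb : b ∈ Subgroup.zpowers u := htop ▸ Subgroup.mem_top b
  obtain ⟨i, rfl⟩ := ha
  obtain ⟨j, rfl⟩ := hb
  exact ((Commute.refl u).zpow_zpow i j).eq

lemma orderOf_notin_N {N : Subgroup G} (hp : p.Prime) (hq : q.Prime) (hlt : p < q)
    (hcard : Nat.card G = p * q) (hna : ¬ ∀ a b : G, a * b = b * a)
    (hN : N.Normal) (hNq : Nat.card N = q) {u : G} (hu : u ∉ N) : orderOf u = p := by
  haveI := hN
  set φ := QuotientGroup.mk' N with hφ
  have hu1 : φ u ≠ 1 := by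
    rw [hφ, QuotientGroup.mk'_apply, Ne, QuotientGroup.eq_one_iff]
    exact hu
  have hm1 : orderOf (φ u) ∣ p := (card_quot hq hcard hNq) ▸ orderOf_dvd_natCard (φ u)
  have hmp : orderOf (φ u) = p := by
    rcases (Nat.Prime.eq_one_or_self_of_dvd hp _ hm1) with h | h
    · exact absurd (orderOf_eq_one_iff.mp h) hu1
    · exact h
  have hpu : p ∣ orderOf u := hmp ▸ orderOf_map_dvd φ u
  have hug : orderOf u ∣ p * q := hcard ▸ orderOf_dvd_natCard u
  rcases Stmt9.divisors_pq hp hq hlt.ne hug with h | h | h | h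
  · exfalso; rw [h] at hpu; exact hp.one_lt.ne' (Nat.eq_one_of_dvd_one hpu)
  · exact h
  · exfalso; rw [h] at hpu
    exact hlt.ne ((Nat.prime_dvd_prime_iff_eq hp hq).mp hpu)
  · exact absurd h (orderOf_ne_pq hcard hna u)

lemma coset_lemma {N : Subgroup G} (hp : p.Prime) (hq : q.Prime)
    (hcard : Nat.card G = p * q) (hN : N.Normal) (hNq : Nat.card N = q)
    {l₁ l₂ : List G} (h : (l₁ : Multiset G) = (l₂ : Multiset G)) :
    l₁.prod⁻¹ * l₂.prod ∈ N := by
  haveI := hN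
  haveI := Fact.mk hp
  haveI : IsCyclic (G ⧸ N) := isCyclic_of_prime_card (card_quot hq hcard hNq)
  letI : CommGroup (G ⧸ N) := IsCyclic.commGroup
  set φ := QuotientGroup.mk' N with hφ
  have hperm : l₁.Perm l₂ := Multiset.coe_eq_coe.mp h
  have hprod : φ l₁.prod = φ l₂.prod := by
    rw [map_list_prod, map_list_prod]
    exact ((hperm.map φ).prod_eq' (List.pairwise_of_forall_mem_list fun a _ b _ => mul_comm a b))
  have h1 : φ (l₁.prod⁻¹ * l₂.prod) = 1 := by
    rw [map_mul, map_inv, hprod, inv_mul_cancel]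
  rwa [hφ, QuotientGroup.mk'_apply, QuotientGroup.eq_one_iff] at h1

lemma coset_corr {N : Subgroup G} (hp : p.Prime) (hq : q.Prime)
    (hcard : Nat.card G = p * q) (hN : N.Normal) (hNq : Nat.card N = q)
    {T : Multiset G} {x y : G} (hx : x ∈ prodSet T) (hy : y ∈ prodSet T) :
    x⁻¹ * y ∈ N := by
  obtain ⟨l₁, hl₁, rfl⟩ := hx
  obtain ⟨l₂, hl₂, rfl⟩ := hy
  exact coset_lemma hp hq hcard hN hNq (hl₁.trans hl₂.symm)

lemma orb_lemma {g x : G} (hr : (orderOf g).Prime) (hc : ¬ Commute g x) :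
    ∀ j k : ℕ, j ≤ k → k < orderOf g →
      g ^ j * x * (g ^ j)⁻¹ = g ^ k * x * (g ^ k)⁻¹ → j = k := by
  intro j k hjk hk h
  by_contra hne
  set m := k - j with hm
  have hm0 : 0 < m := by omega
  have hmlt : m < orderOf g := by omega
  have hkj : g ^ k = g ^ j * g ^ m := by rw [← pow_add]; congr 1; omega
  rw [hkj] at h
  have hx2 : x = g ^ m * x * (g ^ m)⁻¹ := by
    calc x = (g ^ j)⁻¹ * (g ^ j * x * (g ^ j)⁻¹) * g ^ j := by group
    _ = (g ^ j)⁻¹ * (g ^ j * g ^ m * x * (g ^ j * g ^ m)⁻¹) * g ^ j := by rw [h]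
    _ = g ^ m * x * (g ^ m)⁻¹ := by group
  have hcm : Commute (g ^ m) x := by
    have h3 : x * g ^ m = g ^ m * x := by
      conv_lhs => rw [hx2]
      group
    exact h3.symm
  have hcop : m.Coprime (orderOf g) :=
    Nat.Coprime.symm ((hr.coprime_iff_not_dvd).mpr (by
      intro hdvd
      exact absurd (Nat.le_of_dvd hm0 hdvd) (not_le.mpr hmlt)))
  obtain ⟨a, ha⟩ := exists_pow_eq_self_of_coprime hcop
  have hfin : Commute g x := by
    have h4 := hcm.pow_left a
    rwa [ha] at h4
  exact hc hfin

lemma prodSet_nonempty (S : Multiset G) : (prodSet S).Nonempty :=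
  ⟨S.toList.prod, S.toList, Multiset.coe_toList S, rfl⟩

lemma mul_mem_prodSet [DecidableEq G] {S : Multiset G} {g : G} (hg : g ∈ S) {P : G}
    (hP : P ∈ prodSet (S.erase g)) : P * g ∈ prodSet S ∧ g * P ∈ prodSet S := by
  obtain ⟨l, hl, rfl⟩ := hP
  constructor
  · refine ⟨l ++ [g], ?_, by rw [List.prod_append, List.prod_singleton]⟩
    have h2 : ((l ++ [g] : List G) : Multiset G) = ((g :: l : List G) : Multiset G) :=
      Multiset.coe_eq_coe.mpr (List.perm_append_singleton g l)
    rw [h2, ← Multiset.cons_coe, hl, Multiset.cons_erase hg]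
  · refine ⟨g :: l, ?_, List.prod_cons⟩
    rw [← Multiset.cons_coe, hl, Multiset.cons_erase hg]

lemma case_i [DecidableEq G] {S : Multiset G} {g : G} (hg : g ∈ S) {x : G}
    (hx : x ∈ prodSet (S.erase g)) (hnotin : g * x * g⁻¹ ∉ prodSet (S.erase g)) :
    (prodSet (S.erase g)).ncard + 1 ≤ (prodSet S).ncard := by
  set π' := prodSet (S.erase g) with hπ'
  set A := (fun y => y * g) '' π' with hA
  have hAsub : A ⊆ prodSet S := by
    rintro _ ⟨P, hP, rfl⟩
    exact (mul_mem_prodSet hg hP).1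
  have hgx : g * x ∈ prodSet S := (mul_mem_prodSet hg hx).2
  have hnot : g * x ∉ A := by
    rintro ⟨P, hP, hPe⟩
    have h2 : P = g * x * g⁻¹ := by
      have h3 : P * g = g * x := hPe
      calc P = P * g * g⁻¹ := by group
      _ = g * x * g⁻¹ := by rw [h3]
    exact hnotin (h2 ▸ hP)
  calc π'.ncard + 1 = A.ncard + 1 := by
        rw [hA, Set.ncard_image_of_injective _ (mul_left_injective g)]
  _ = (insert (g * x) A).ncard := (Set.ncard_insert_of_notMem hnot (Set.toFinite A)).symm
  _ ≤ (prodSet S).ncard := Set.ncard_le_ncard (Set.insert_subset hgx hAsub) (Set.toFinite _)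

lemma case_orbit [DecidableEq G] {S : Multiset G} {g : G} (hg : g ∈ S)
    (hinv : ∀ x ∈ prodSet (S.erase g), g * x * g⁻¹ ∈ prodSet (S.erase g))
    {x₀ : G} (hx₀ : x₀ ∈ prodSet (S.erase g)) (hnc : ¬ Commute g x₀)
    (hord : (orderOf g).Prime) : orderOf g ≤ (prodSet S).ncard := by
  set π' := prodSet (S.erase g) with hπ'
  have horb : ∀ k : ℕ, ∀ x ∈ π', g ^ k * x * (g ^ k)⁻¹ ∈ π' := by
    intro k
    induction k with
    | zero => intro x hx; simpa using hx
    | succ k ih =>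
      intro x hx
      have h2 := hinv _ (ih x hx)
      have h3 : g ^ (k+1) * x * (g ^ (k+1))⁻¹ = g * (g ^ k * x * (g ^ k)⁻¹) * g⁻¹ := by
        rw [pow_succ']; group
      rw [h3]; exact h2
  set F := (Finset.range (orderOf g)).image (fun k => g ^ k * x₀ * (g ^ k)⁻¹ * g) with hF
  have hFcard : F.card = orderOf g := by
    rw [hF, Finset.card_image_of_injOn, Finset.card_range]
    intro j hj k hk he
    simp only [Finset.coe_range, Set.mem_Iio] at hj hk
    have he' : g ^ j * x₀ * (g ^ j)⁻¹ = g ^ k * x₀ * (g ^ k)⁻¹ := mul_right_cancel he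
    rcases le_total j k with h | h
    · exact orb_lemma hord hnc j k h hk he'
    · exact (orb_lemma hord hnc k j h hj he'.symm).symm
  have hFsub : (F : Set G) ⊆ prodSet S := by
    intro y hy
    simp only [hF, Finset.coe_image, Set.mem_image, Finset.coe_range, Set.mem_Iio] at hy
    obtain ⟨k, _, rfl⟩ := hy
    exact (mul_mem_prodSet hg (horb k x₀ hx₀)).1
  calc orderOf g = F.card := hFcard.symm
  _ = (F : Set G).ncard := (Set.ncard_coe_finset F).symm
  _ ≤ (prodSet S).ncard := Set.ncard_le_ncard hFsub (Set.toFinite _)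

lemma small_subgroup (hp : p.Prime) (hq : q.Prime) (hne : p ≠ q)
    (hcard : Nat.card G = p * q) (hna : ¬ ∀ a b : G, a * b = b * a)
    {H : Subgroup G} {z : G} (hz : z ∈ H) (hz1 : z ≠ 1) (hne_top : H ≠ ⊤) :
    H = Subgroup.zpowers z := by
  have hrd : orderOf z ∣ p * q := hcard ▸ orderOf_dvd_natCard z
  have hr1 : orderOf z ≠ 1 := fun h => hz1 (orderOf_eq_one_iff.mp h)
  have hrpq : orderOf z ≠ p * q := orderOf_ne_pq hcard hna z
  have hrprime : (orderOf z).Prime := by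
    rcases Stmt9.divisors_pq hp hq hne hrd with h | h | h | h
    · exact absurd h hr1
    · exact h ▸ hp
    · exact h ▸ hq
    · exact absurd h hrpq
  have hHd : Nat.card H ∣ p * q := hcard ▸ H.card_subgroup_dvd_card
  have hHne : Nat.card H ≠ p * q := fun h =>
    hne_top (Subgroup.eq_top_of_card_eq H (h.trans hcard.symm))
  have hzH : Subgroup.zpowers z ≤ H := Subgroup.zpowers_le.mpr hz
  have hrH : orderOf z ∣ Nat.card H := Nat.card_zpowers z ▸ Subgroup.card_dvd_of_le hzH
  have hHcard : Nat.card H = orderOf z := by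
    rcases Stmt9.divisors_pq hp hq hne hHd with h | h | h | h
    · exfalso; rw [h] at hrH; exact hr1 (Nat.eq_one_of_dvd_one hrH)
    · rw [h] at hrH ⊢; exact ((Nat.prime_dvd_prime_iff_eq hrprime hp).mp hrH).symm
    · rw [h] at hrH ⊢; exact ((Nat.prime_dvd_prime_iff_eq hrprime hq).mp hrH).symm
    · exact absurd h hHne
  exact (Subgroup.eq_of_le_of_card_ge hzH (by rw [hHcard, Nat.card_zpowers])).symm

lemma step1 [DecidableEq G] (hp : p.Prime) (hq : q.Prime) (hne : p ≠ q)
    (hcard : Nat.card G = p * q) (hna : ¬ ∀ a b : G, a * b = b * a)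
    {S : Multiset G} (h3 : 3 ≤ Multiset.card S) (hS : ∀ a ∈ S, a ≠ (1 : G))
    (hgen : Subgroup.closure {a : G | a ∈ S} = ⊤) :
    ∃ g ∈ S, Subgroup.closure {a : G | a ∈ S.erase g} = ⊤ := by
  by_contra hcon
  push_neg at hcon
  have hcount : ∀ g ∈ S, S.count g = 1 := by
    intro g hg
    by_contra hc
    have h2 : 2 ≤ S.count g := by
      have := Multiset.one_le_count_iff_mem.mpr hg; omega
    apply hcon g hg
    have hset : {a : G | a ∈ S.erase g} = {a : G | a ∈ S} := by
      ext b
      simp only [Set.mem_setOf_eq]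
      constructor
      · exact fun hb => Multiset.mem_of_mem_erase hb
      · intro hb
        rcases eq_or_ne b g with rfl | hne'
        · rw [← Multiset.count_pos, Multiset.count_erase_self]; omega
        · exact (Multiset.mem_erase_of_ne hne').mpr hb
    rw [hset]; exact hgen
  have hnod : S.Nodup := by
    rw [Multiset.nodup_iff_count_le_one]
    intro a
    by_cases ha : a ∈ S
    · rw [hcount a ha]
    · rw [Multiset.count_eq_zero_of_notMem ha]; omega
  have h0 : S ≠ 0 := by
    intro h; rw [h] at h3; simp at h3
  obtain ⟨s₁, hs₁⟩ := Multiset.exists_mem_of_ne_zero h0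
  have hc1 : Multiset.card (S.erase s₁) = Multiset.card S - 1 := by
    rw [Multiset.card_erase_of_mem hs₁]; rfl
  have h0' : S.erase s₁ ≠ 0 := by
    intro h
    have := congrArg Multiset.card h
    rw [hc1] at this; simp at this; omega
  obtain ⟨s₂, hs₂⟩ := Multiset.exists_mem_of_ne_zero h0'
  have h0'' : (S.erase s₁).erase s₂ ≠ 0 := by
    intro h
    have h4 := congrArg Multiset.card h
    rw [Multiset.card_erase_of_mem hs₂, hc1] at h4
    simp at h4; omega
  obtain ⟨s₃, hs₃⟩ := Multiset.exists_mem_of_ne_zero h0''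
  have hs₂S : s₂ ∈ S := Multiset.mem_of_mem_erase hs₂
  have hs₃e : s₃ ∈ S.erase s₁ := Multiset.mem_of_mem_erase hs₃
  have hs₃S : s₃ ∈ S := Multiset.mem_of_mem_erase hs₃e
  have hne21 : s₂ ≠ s₁ := by
    intro h; subst h
    exact (Multiset.Nodup.notMem_erase hnod) hs₂
  have hne32 : s₃ ≠ s₂ := by
    intro h; subst h
    exact (Multiset.Nodup.notMem_erase (Multiset.Nodup.erase s₁ hnod)) hs₃
  set H₁ := Subgroup.closure {a : G | a ∈ S.erase s₁} with hH₁
  set H₂ := Subgroup.closure {a : G | a ∈ S.erase s₂} with hH₂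
  have hs₃H₁ : s₃ ∈ H₁ := Subgroup.subset_closure hs₃e
  have hs₃H₂ : s₃ ∈ H₂ := Subgroup.subset_closure
    (show s₃ ∈ S.erase s₂ from (Multiset.mem_erase_of_ne hne32).mpr hs₃S)
  have hs₃1 : s₃ ≠ 1 := hS s₃ hs₃S
  have hH₁z : H₁ = Subgroup.zpowers s₃ :=
    small_subgroup hp hq hne hcard hna hs₃H₁ hs₃1 (hcon s₁ hs₁)
  have hH₂z : H₂ = Subgroup.zpowers s₃ :=
    small_subgroup hp hq hne hcard hna hs₃H₂ hs₃1 (hcon s₂ hs₂S)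
  apply hcon s₁ hs₁
  rw [← top_le_iff, ← hgen, ← hH₁]
  apply (Subgroup.closure_le H₁).mpr
  intro b hb
  simp only [Set.mem_setOf_eq] at hb
  rcases eq_or_ne b s₁ with rfl | hbne
  · have hbH₂ : b ∈ H₂ := Subgroup.subset_closure
      (show b ∈ S.erase s₂ from (Multiset.mem_erase_of_ne hne21.symm).mpr hb)
    rw [hH₂z, ← hH₁z] at hbH₂
    exact hbH₂
  · exact Subgroup.subset_closure ((Multiset.mem_erase_of_ne hbne).mpr hb)

end Stmt9

theorem stmt9 {G : Type*} [Group G] [Finite G] (p q : ℕ) (hp : p.Prime) (hq : q.Prime)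
    (hpodd : Odd p) (hqodd : Odd q) (hpq : p ∣ q - 1)
    (hcard : Nat.card G = p * q) (hna : ¬ ∀ a b : G, a * b = b * a)
    (S : Multiset G) (hS : ∀ a ∈ S, a ≠ (1 : G))
    (hgen : Subgroup.closure {a : G | a ∈ S} = ⊤) :
    min p (Multiset.card S) ≤ (prodSet S).ncard := by
  classical
  have hp2 : p ≠ 2 := by rintro rfl; exact (by decide : ¬ Odd 2) hpodd
  have hq2 : q ≠ 2 := by rintro rfl; exact (by decide : ¬ Odd 2) hqodd
  have hp3 : 3 ≤ p := by have := hp.two_le; omega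
  have hq3 : 3 ≤ q := by have := hq.two_le; omega
  have hlt : p < q := by
    have h1 := Nat.le_of_dvd (by omega) hpq
    omega
  obtain ⟨N, hN, hNq⟩ := Stmt9.exists_normal_q hp hq hlt hcard
  haveI := hN
  suffices Hind : ∀ n : ℕ, ∀ S : Multiset G, Multiset.card S = n → (∀ a ∈ S, a ≠ (1:G)) →
      Subgroup.closure {a : G | a ∈ S} = ⊤ → min p n ≤ (prodSet S).ncard by
    exact Hind _ S rfl hS hgen
  clear hS hgen S
  intro n
  induction n using Nat.strong_induction_on with
  | _ n IH =>
  intro S hn hS hgen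
  rcases Nat.lt_or_ge n 3 with hn3 | hn3
  · -- small cases n ≤ 2
    rcases Nat.lt_or_ge n 1 with h0 | h1
    · have hn0 : n = 0 := by omega
      subst hn0; simp
    rcases Nat.lt_or_ge n 2 with h1' | h2
    · have hn1 : n = 1 := by omega
      subst hn1
      have hpos : 0 < (prodSet S).ncard :=
        (Set.ncard_pos (Set.toFinite _)).mpr (Stmt9.prodSet_nonempty S)
      omega
    · have hn2 : n = 2 := by omega
      subst hn2
      obtain ⟨a, b, hab⟩ := Multiset.card_eq_two.mp hn
      subst hab
      have haS : a ∈ ({a, b} : Multiset G) := by simp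
      have hbS : b ∈ ({a, b} : Multiset G) := by simp
      have hne : a * b ≠ b * a := by
        intro heq
        have hcen : ∀ g : G, g ∈ Subgroup.centralizer {a} := by
          intro g
          have hg : g ∈ Subgroup.closure {x : G | x ∈ ({a, b} : Multiset G)} := by
            rw [hgen]; exact Subgroup.mem_top g
          have hsub : {x : G | x ∈ ({a, b} : Multiset G)} ⊆ ↑(Subgroup.centralizer {a}) := by
            intro x hx
            simp only [Set.mem_setOf_eq, Multiset.insert_eq_cons, Multiset.mem_cons,
              Multiset.mem_singleton] at hx
            rcases hx with rfl | rfl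
            · exact Subgroup.mem_centralizer_iff.mpr (by rintro y rfl; rfl)
            · exact Subgroup.mem_centralizer_iff.mpr (by rintro y rfl; exact heq)
          exact (Subgroup.closure_le _).mpr hsub hg
        have hcenter : a ∈ Subgroup.center G := Subgroup.mem_center_iff.mpr
          (fun g => (Subgroup.mem_centralizer_iff.mp (hcen g) a rfl).symm)
        rw [Stmt9.center_eq_bot hp hq hlt.ne hcard hna, Subgroup.mem_bot] at hcenter
        exact hS a haS hcenter
      have hsub2 : ({a * b, b * a} : Set G) ⊆ prodSet ({a, b} : Multiset G) := by
        rintro x hx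
        rcases hx with rfl | rfl
        · exact ⟨[a, b], rfl, by simp⟩
        · refine ⟨[b, a], ?_, by simp⟩
          rw [← Multiset.cons_coe, ← Multiset.cons_coe]
          exact Multiset.cons_swap b a 0
      calc min p 2 ≤ 2 := min_le_right _ _
      _ = ({a * b, b * a} : Set G).ncard := (Set.ncard_pair hne).symm
      _ ≤ (prodSet ({a, b} : Multiset G)).ncard :=
            Set.ncard_le_ncard hsub2 (Set.toFinite _)
  · -- main case n ≥ 3
    have hIH : ∀ g ∈ S, Subgroup.closure {a : G | a ∈ S.erase g} = ⊤ →
        min p (n-1) ≤ (prodSet (S.erase g)).ncard := by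
      intro g hg hrem
      refine IH (n-1) (by omega) _ ?_ ?_ hrem
      · rw [Multiset.card_erase_of_mem hg, hn]; rfl
      · exact fun a ha => hS a (Multiset.mem_of_mem_erase ha)
    have hfin_i : ∀ g ∈ S, Subgroup.closure {a : G | a ∈ S.erase g} = ⊤ →
        (∃ x ∈ prodSet (S.erase g), g * x * g⁻¹ ∉ prodSet (S.erase g)) →
        min p n ≤ (prodSet S).ncard := by
      rintro g hg hrem ⟨x, hx, hnx⟩
      have h1 := Stmt9.case_i hg hx hnx
      have h2 := hIH g hg hrem
      omega
    have hple : p ≤ (prodSet S).ncard → min p n ≤ (prodSet S).ncard :=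
      fun h => le_trans (min_le_left _ _) h
    by_cases hO : ∃ u ∈ S, u ∉ N ∧ Subgroup.closure {a : G | a ∈ S.erase u} = ⊤
    · obtain ⟨u, huS, huN, hrem⟩ := hO
      by_cases hcase : ∃ x ∈ prodSet (S.erase u), u * x * u⁻¹ ∉ prodSet (S.erase u)
      · exact hfin_i u huS hrem hcase
      · push_neg at hcase
        have hordu : orderOf u = p :=
          Stmt9.orderOf_notin_N hp hq hlt hcard hna hN hNq huN
        by_cases hcom : ∃ x ∈ prodSet (S.erase u), ¬ (u * x = x * u)
        · obtain ⟨x₀, hx₀, hnc⟩ := hcom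
          apply hple
          have h5 := Stmt9.case_orbit huS hcase hx₀ (hnc : ¬ Commute u x₀)
            (by rw [hordu]; exact hp)
          rwa [hordu] at h5
        · push_neg at hcom
          exfalso
          have h2 : 1 < (prodSet (S.erase u)).ncard := by
            have := hIH u huS hrem; omega
          obtain ⟨x, y, hx, hy, hxy⟩ := (Set.one_lt_ncard_iff (Set.toFinite _)).mp h2
          have hzN : x⁻¹ * y ∈ N := Stmt9.coset_corr hp hq hcard hN hNq hx hy
          have hz1 : x⁻¹ * y ≠ 1 := fun h => hxy (by
            have := congrArg (fun t => x * t) h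
            simpa using this.symm)
          have hcz : Commute u (x⁻¹ * y) :=
            Commute.mul_right (Commute.inv_right (hcom x hx)) (hcom y hy)
          exact Stmt9.cen_lemma hp hq hlt hcard hna hNq hzN hz1 huN hcz
    · push_neg at hO
      obtain ⟨g, hgS, hrem⟩ := Stmt9.step1 hp hq hlt.ne hcard hna
        (show 3 ≤ Multiset.card S by rw [hn]; omega) hS hgen
      have hgN : g ∈ N := by
        by_contra hgN
        exact hO g hgS hgN hrem
      have hg1 : g ≠ 1 := hS g hgS
      have hNne_top : N ≠ ⊤ := by
        intro h
        rw [h, Subgroup.card_top, hcard] at hNq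
        nlinarith [hp.two_le, hq.two_le]
      have hUex : ∃ u ∈ S, u ∉ N := by
        by_contra hall
        push_neg at hall
        apply hNne_top
        rw [← top_le_iff, ← hgen]
        exact (Subgroup.closure_le N).mpr (fun b hb => hall b hb)
      obtain ⟨u, huS, huN⟩ := hUex
      have hune : u ≠ g := fun h => huN (h ▸ hgN)
      by_cases hα : ∃ v ∈ S.erase u, v ∉ N
      · exfalso
        obtain ⟨v, hv, hvN⟩ := hα
        apply hO u huS huN
        set H := Subgroup.closure {a : G | a ∈ S.erase u} with hH
        have hgH : g ∈ H := Subgroup.subset_closure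
          ((Multiset.mem_erase_of_ne (fun h => hune h.symm)).mpr hgS)
        have hNH : N ≤ H := by
          rw [← Stmt9.zpowers_eq_N hq hNq hgN hg1]
          exact Subgroup.zpowers_le.mpr hgH
        have hvH : v ∈ H := Subgroup.subset_closure hv
        exact Stmt9.top_of_gt_N hp hq hlt hcard hNq hNH hvH hvN
      · push_neg at hα
        by_cases hcase : ∃ x ∈ prodSet (S.erase g), g * x * g⁻¹ ∉ prodSet (S.erase g)
        · exact hfin_i g hgS hrem hcase
        · push_neg at hcase
          have huSg : u ∈ S.erase g := (Multiset.mem_erase_of_ne hune).mpr huS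
          set T := (S.erase g).erase u with hT
          have hl : ((u :: T.toList : List G) : Multiset G) = S.erase g := by
            rw [← Multiset.cons_coe, Multiset.coe_toList, hT, Multiset.cons_erase huSg]
          have hwN : T.toList.prod ∈ N := by
            apply Subgroup.list_prod_mem
            intro z hz
            rw [Multiset.mem_toList] at hz
            have hz2 : z ∈ S.erase u := by
              have hle : T ≤ S.erase u := by
                rw [hT, Multiset.erase_comm]
                exact Multiset.erase_le _ _
              exact Multiset.mem_of_le hle hz
            exact hα z hz2
          set P := (u :: T.toList : List G).prod with hP
          have hPmem : P ∈ prodSet (S.erase g) := ⟨_, hl, rfl⟩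
          have hPN : P ∉ N := by
            intro hPmemN
            apply huN
            have hPe : P = u * T.toList.prod := List.prod_cons
            have hu2 : u = P * (T.toList.prod)⁻¹ := by rw [hPe]; group
            rw [hu2]
            exact mul_mem hPmemN (inv_mem hwN)
          have hnc : ¬ Commute g P := fun hc =>
            Stmt9.cen_lemma hp hq hlt hcard hna hNq hgN hg1 hPN hc.symm
          have hordg : orderOf g = q := by
            rw [← Nat.card_zpowers, Stmt9.zpowers_eq_N hq hNq hgN hg1, hNq]
          apply hple
          have h6 := Stmt9.case_orbit hgS hcase hPmem hnc (by rw [hordg]; exact hq)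
          rw [hordg] at h6
          omega
end

section
/- Let p, q be odd primes with p | q−1 and let G = C_q ⋊ C_p with commutator subgroup G′. If T is a sequence over G of length |T| ≥ q such that some ordering of T has product lying in G′, then T contains a nonempty product-one subsequence. -/
open Subgroup
open scoped Pointwise


section GroupFacts

variable {G : Type*} [Group G] [Finite G] {p q : ℕ}

lemma commutator_card_eq (hp : p.Prime) (hq : q.Prime) (hpq : p ∣ q - 1)
    (hcard : Nat.card G = p * q) (hna : ¬ ∀ a b : G, a * b = b * a) :
    Nat.card (commutator G) = q ∧
      (∀ β c : G, β ∈ commutator G → β ≠ 1 → c * β = β * c → c ∈ commutator G) := by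
  classical
  have hq2 : 2 ≤ q := hq.two_le
  have hp2 : 2 ≤ p := hp.two_le
  have hplt : p < q := by
    have := Nat.le_of_dvd (by omega) hpq; omega
  have hpqne : p ≠ q := by omega
  haveI : Fact q.Prime := ⟨hq⟩
  haveI : Fact p.Prime := ⟨hp⟩
  -- Sylow q-subgroup
  obtain ⟨P⟩ : Nonempty (Sylow q G) := Sylow.nonempty
  have hPcard : Nat.card (P : Subgroup G) = q := by
    rw [Sylow.card_eq_multiplicity, hcard]
    have h1 : (p * q).factorization q = 1 := by
      rw [Nat.factorization_mul (by omega) (by omega)]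
      have hpq0 : p.factorization q = 0 :=
        Nat.factorization_eq_zero_of_not_dvd (fun h => by
          have := Nat.le_of_dvd (by omega) h; omega)
      simp [hpq0, hq.factorization]
    rw [h1, pow_one]
  have hPindex : (P : Subgroup G).index = p := by
    have h2 := Subgroup.card_mul_index (P : Subgroup G)
    rw [hPcard, hcard, mul_comm p q] at h2
    exact Nat.eq_of_mul_eq_mul_left (by omega) h2
  -- unique Sylow q-subgroup, so P is normal
  have hs1 : Nat.card (Sylow q G) = 1 := by
    have hdvd : Nat.card (Sylow q G) ∣ p := hPindex ▸ P.card_dvd_index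
    have hmod := card_sylow_modEq_one q G
    rcases (Nat.Prime.eq_one_or_self_of_dvd hp _ hdvd) with h | h
    · exact h
    · exfalso
      rw [h] at hmod
      have : p % q = 1 % q := hmod
      rw [Nat.mod_eq_of_lt hplt, Nat.mod_eq_of_lt (by omega)] at this
      omega
  haveI hss : Subsingleton (Sylow q G) := (Nat.card_eq_one_iff_unique.mp hs1).1
  have hPnormal : (P : Subgroup G).Normal := by
    rw [← Subgroup.normalizer_eq_top_iff]
    rw [eq_top_iff']
    intro g
    exact Sylow.smul_eq_iff_mem_normalizer.mp (Subsingleton.elim _ _)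
  haveI := hPnormal
  -- commutator ≤ P
  have hcomm_le : commutator G ≤ (P : Subgroup G) := by
    have hcyc : IsCyclic (G ⧸ (P : Subgroup G)) := by
      apply isCyclic_of_prime_card (p := p)
      rw [← Subgroup.index_eq_card, hPindex]
    letI : CommGroup (G ⧸ (P : Subgroup G)) := IsCyclic.commGroup
    have := Abelianization.commutator_subset_ker (QuotientGroup.mk' (P : Subgroup G))
    rwa [QuotientGroup.ker_mk'] at this
  -- commutator ≠ ⊥
  have hne_bot : commutator G ≠ ⊥ := by
    intro hbot
    apply hna
    intro a b
    open scoped commutatorElement in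
    have : ⁅a, b⁆ ∈ commutator G := by
      rw [_root_.commutator_def]
      exact Subgroup.commutator_mem_commutator (mem_top a) (mem_top b)
    rw [hbot, Subgroup.mem_bot] at this
    exact commutatorElement_eq_one_iff_mul_comm.mp this
  have hNcard : Nat.card (commutator G) = q := by
    have hdvd : Nat.card (commutator G) ∣ q := hPcard ▸ Subgroup.card_dvd_of_le hcomm_le
    rcases (Nat.Prime.eq_one_or_self_of_dvd hq _ hdvd) with h | h
    · exact absurd (Subgroup.card_eq_one.mp h) hne_bot
    · exact h
  refine ⟨hNcard, ?_⟩
  -- centralizer fact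
  intro β c hβN hβ1 hcomm
  set N := commutator G with hN
  haveI : IsCyclic N := isCyclic_of_prime_card (p := q) hNcard
  letI : CommGroup N := IsCyclic.commGroup
  have hNle : N ≤ Subgroup.centralizer {β} := by
    intro n hn
    rw [Subgroup.mem_centralizer_iff]
    intro x hx
    rw [Set.mem_singleton_iff] at hx
    subst hx
    have h5 : (⟨n, hn⟩ : N) * ⟨x, hβN⟩ = ⟨x, hβN⟩ * ⟨n, hn⟩ := mul_comm _ _
    have h6 := congrArg (Subtype.val) h5
    simpa using h6.symm
  set C := Subgroup.centralizer {β} with hC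
  have hqC : q ∣ Nat.card C := hNcard ▸ Subgroup.card_dvd_of_le hNle
  have hCG : Nat.card C ∣ p * q := hcard ▸ Subgroup.card_subgroup_dvd_card C
  have hCne : Nat.card C ≠ p * q := by
    intro habs
    -- then C = ⊤ and β is central
    have hCtop : C = ⊤ := Subgroup.eq_top_of_card_eq _ (by rw [habs, hcard])
    have hβcen : β ∈ Subgroup.center G := by
      rw [Subgroup.mem_center_iff]
      intro g
      have hg : g ∈ C := hCtop ▸ mem_top g
      rw [hC, Subgroup.mem_centralizer_iff] at hg
      exact (hg β rfl).symm ▸ (hg β rfl)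
    -- center has card divisible by q
    have hord : orderOf β = q := by
      have h1 : orderOf β ∣ q := by
        have := Subgroup.orderOf_dvd_natCard N hβN
        rwa [hNcard] at this
      rcases (Nat.Prime.eq_one_or_self_of_dvd hq _ h1) with h | h
      · exact absurd (orderOf_eq_one_iff.mp h) hβ1
      · exact h
    have hqZ : q ∣ Nat.card (Subgroup.center G) := by
      have := Subgroup.card_dvd_of_le (Subgroup.zpowers_le.mpr hβcen)
      rwa [Nat.card_zpowers, hord] at this
    have hZdvd : Nat.card (Subgroup.center G) ∣ p * q := hcard ▸ Subgroup.card_subgroup_dvd_card _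
    -- index of center is 1 or p
    have hZindex : (Subgroup.center G).index ∣ p := by
      obtain ⟨e, he⟩ := hqZ
      have h2 := Subgroup.card_mul_index (Subgroup.center G)
      rw [hcard, he] at h2
      -- q * e * index = p * q  →  e * index = p
      have h7 : e * (Subgroup.center G).index = p := by
        have h3 : q * (e * (Subgroup.center G).index) = q * p := by
          rw [← mul_assoc, h2, mul_comm]
        exact Nat.eq_of_mul_eq_mul_left (by omega) h3
      exact Dvd.intro_left e h7
    have hcyc : IsCyclic (G ⧸ Subgroup.center G) := by
      rcases (Nat.Prime.eq_one_or_self_of_dvd hp _ hZindex) with h | h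
      · have : Nat.card (G ⧸ Subgroup.center G) = 1 := by
          rw [← Subgroup.index_eq_card]; exact h
        haveI : Subsingleton (G ⧸ Subgroup.center G) := (Nat.card_eq_one_iff_unique.mp this).1
        infer_instance
      · exact isCyclic_of_prime_card (p := p) (by rw [← Subgroup.index_eq_card]; exact h)
    exact hna (commutative_of_cyclic_center_quotient (QuotientGroup.mk' (Subgroup.center G))
      (by rw [QuotientGroup.ker_mk']))
  have hCq : Nat.card C = q := by
    obtain ⟨e, he⟩ := hqC
    have he_dvd : e ∣ p := by
      have h4 : q * e ∣ q * p := by rw [← he, mul_comm q p]; exact hCG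
      exact (mul_dvd_mul_iff_left (by omega : q ≠ 0)).mp h4
    rcases (Nat.Prime.eq_one_or_self_of_dvd hp _ he_dvd) with h | h
    · rw [he, h, mul_one]
    · exfalso; exact hCne (by rw [he, h, mul_comm])
  have hNC : N = C := Subgroup.eq_of_le_of_card_ge hNle (by rw [hNcard, hCq])
  have hcC : c ∈ C := by
    rw [hC, Subgroup.mem_centralizer_iff]
    intro x hx
    rw [Set.mem_singleton_iff] at hx
    subst hx
    exact hcomm.symm
  rwa [hNC]

end GroupFacts


/-- products of nonempty subsequences -/
def piSub {G : Type*} [Group G] (S : Multiset G) : Set G :=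
  {g | ∃ l : List G, l ≠ [] ∧ (↑l : Multiset G) ≤ S ∧ l.prod = g}

noncomputable def piN {G : Type*} [Group G] [Finite G] (N : Subgroup G) (S : Multiset G) :
    Finset ↥N :=
  Set.Finite.toFinset (Set.toFinite {x : ↥N | (x : G) ∈ piSub S})

lemma mem_piN {G : Type*} [Group G] [Finite G] {N : Subgroup G} {S : Multiset G} {x : ↥N} :
    x ∈ piN N S ↔ (x : G) ∈ piSub S := by
  simp [piN]

lemma piSub_mono {G : Type*} [Group G] {S₁ S₂ : Multiset G} (h : S₁ ≤ S₂) :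
    piSub S₁ ⊆ piSub S₂ := by
  rintro g ⟨l, hl, hle, hprod⟩
  exact ⟨l, hl, hle.trans h, hprod⟩

lemma piN_mono {G : Type*} [Group G] [Finite G] {N : Subgroup G} {S₁ S₂ : Multiset G}
    (h : S₁ ≤ S₂) : piN N S₁ ⊆ piN N S₂ := by
  intro x hx
  rw [mem_piN] at hx ⊢
  exact piSub_mono h hx

lemma cd_prime {H : Type*} [Group H] [DecidableEq H] {q : ℕ} (hq : q.Prime) (hH : Nat.card H = q)
    {s t : Finset H} (hs : s.Nonempty) (ht : t.Nonempty) :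
    min q (s.card + t.card - 1) ≤ (s * t).card := by
  classical
  have hmin : (q : ℕ∞) ≤ Monoid.minOrder H := by
    rw [Monoid.le_minOrder]
    intro a ha _
    have h1 : orderOf a ∣ q := hH ▸ orderOf_dvd_natCard a
    rcases hq.eq_one_or_self_of_dvd _ h1 with h | h
    · exact absurd (orderOf_eq_one_iff.mp h) ha
    · rw [h]
  have hcd := cauchy_davenport_minOrder_mul hs ht
  have h2 : min (q : ℕ∞) ((s.card + t.card - 1 : ℕ) : ℕ∞) ≤ (((s * t).card : ℕ) : ℕ∞) :=
    le_trans (min_le_min hmin le_rfl) hcd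
  rcases le_total q (s.card + t.card - 1) with h | h
  · rw [min_eq_left h]
    rw [min_eq_left (by exact_mod_cast h)] at h2
    exact_mod_cast h2
  · rw [min_eq_right h]
    rw [min_eq_right (by exact_mod_cast h)] at h2
    exact_mod_cast h2

lemma main_count {G : Type*} [Group G] [Finite G] {q : ℕ} (hq : q.Prime)
    (hNcard : Nat.card (commutator G) = q)
    (hcent : ∀ β c : G, β ∈ commutator G → β ≠ 1 → c * β = β * c → c ∈ commutator G) :
    ∀ (n : ℕ) (S : Multiset G), Multiset.card S = n →
      (Multiset.map (Abelianization.of : G →* Abelianization G) S).prod = 1 →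
      (1 : G) ∉ piSub S →
      min q (Multiset.card S) ≤ (piN (commutator G) S).card := by
  classical
  intro n
  induction n using Nat.strong_induction_on with
  | _ n ih =>
  intro S hn hmap h1
  rcases eq_or_ne S 0 with rfl | hS0
  · simp
  -- notation
  have memN_iff : ∀ g : G, g ∈ commutator G ↔ Abelianization.of g = 1 := fun g =>
    (QuotientGroup.eq_one_iff g).symm
  have coe_map_prod : ∀ l : List G,
      (Multiset.map (Abelianization.of : G →* Abelianization G) (↑l : Multiset G)).prod
        = Abelianization.of l.prod := by
    intro l
    rw [Multiset.map_coe, Multiset.prod_coe, ← map_list_prod]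
  -- minimal block
  have hpred : ∃ m : ℕ, ∃ B : Multiset G, B ≤ S ∧ B ≠ 0 ∧
      (Multiset.map (Abelianization.of : G →* Abelianization G) B).prod = 1 ∧
      Multiset.card B = m :=
    ⟨Multiset.card S, S, le_rfl, hS0, hmap, rfl⟩
  obtain ⟨B, hBS, hB0, hBmap, hBcard⟩ := Nat.find_spec hpred
  set m := Nat.find hpred with hm
  set lB := B.toList with hlBdef
  have hlB : (↑lB : Multiset G) = B := B.coe_toList
  have hb_card : Multiset.card B = lB.length := by rw [← hlB, Multiset.coe_card]
  have hbpos : 0 < lB.length := by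
    rw [← hb_card]
    exact Multiset.card_pos.mpr hB0
  have hlBne : lB ≠ [] := List.ne_nil_of_length_pos hbpos
  set β := lB.prod with hβdef
  have hβN : β ∈ commutator G := by
    rw [memN_iff, ← coe_map_prod, hlB]
    exact hBmap
  have hβ1 : β ≠ 1 := by
    intro h
    exact h1 ⟨lB, hlBne, by rw [hlB]; exact hBS, h⟩
  set Q : ℕ → G := fun i => (lB.take i).prod with hQdef
  set r : ℕ → G := fun i => (Q i)⁻¹ * β * Q i with hrdef
  have hrN : ∀ i, r i ∈ commutator G := by
    intro i
    have := Subgroup.Normal.conj_mem inferInstance β hβN (Q i)⁻¹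
    simpa [inv_inv] using this
  -- rotations
  set rot : ℕ → List G := fun i => lB.drop i ++ lB.take i with hrotdef
  have hrot_coe : ∀ i, (↑(rot i) : Multiset G) = B := by
    intro i
    rw [← hlB, Multiset.coe_eq_coe]
    exact (List.perm_append_comm).trans (List.Perm.of_eq (List.take_append_drop i lB))
  have hrot_ne : ∀ i, rot i ≠ [] := by
    intro i h
    apply hB0
    rw [← hrot_coe i, h]
    simp
  have hrot_prod : ∀ i, (rot i).prod = r i := by
    intro i
    have h2 : Q i * (lB.drop i).prod = β := by
      rw [hQdef, hβdef]
      simp only []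
      rw [← List.prod_append, List.take_append_drop]
    have h3 : (lB.drop i).prod = (Q i)⁻¹ * β := by
      rw [← h2]; group
    rw [hrotdef]
    simp only []
    rw [List.prod_append, h3, hrdef]
  -- injectivity
  have key_inj : ∀ i j : ℕ, i < j → j < lB.length → r i ≠ r j := by
    intro i j hij hj hreq
    have h9 : (Q j * (Q i)⁻¹) * β * (Q j * (Q i)⁻¹)⁻¹ = β := by
      have h8 : Q j * ((Q i)⁻¹ * β * Q i) * (Q j)⁻¹ = β := by
        rw [hrdef] at hreq
        simp only [] at hreq
        rw [hreq]; group
      calc (Q j * (Q i)⁻¹) * β * (Q j * (Q i)⁻¹)⁻¹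
          = Q j * ((Q i)⁻¹ * β * Q i) * (Q j)⁻¹ := by group
        _ = β := h8
    have h10 : (Q j * (Q i)⁻¹) * β = β * (Q j * (Q i)⁻¹) := by
      calc (Q j * (Q i)⁻¹) * β
          = ((Q j * (Q i)⁻¹) * β * (Q j * (Q i)⁻¹)⁻¹) * (Q j * (Q i)⁻¹) := by group
        _ = β * (Q j * (Q i)⁻¹) := by rw [h9]
    have hcN : Q j * (Q i)⁻¹ ∈ commutator G := hcent β _ hβN hβ1 h10
    have hφQ : (Abelianization.of (Q j) : Abelianization G) = Abelianization.of (Q i) := by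
      have h11 := (memN_iff _).mp hcN
      rw [map_mul, map_inv] at h11
      exact mul_inv_eq_one.mp h11
    -- the proper segment
    set l' := (lB.drop i).take (j - i) with hl'def
    have hsplit : lB.take j = lB.take i ++ l' := by
      have h12 : i + (j - i) = j := by omega
      rw [← h12, List.take_add]
    have hQl' : Q j = Q i * l'.prod := by
      rw [hQdef]
      simp only []
      rw [hsplit, List.prod_append]
    have hl'map : (Multiset.map (Abelianization.of : G →* Abelianization G)
        (↑l' : Multiset G)).prod = 1 := by
      rw [coe_map_prod]
      have h13 : Abelianization.of (Q j) = Abelianization.of (Q i) * Abelianization.of l'.prod := by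
        rw [hQl', map_mul]
      rw [hφQ] at h13
      exact (mul_eq_left.mp h13.symm)
    have hl'len : l'.length = j - i := by
      rw [hl'def, List.length_take, List.length_drop]
      omega
    have hl'ne : l' ≠ [] := List.ne_nil_of_length_pos (by rw [hl'len]; omega)
    have hl'sub : (↑l' : Multiset G) ≤ B := by
      rw [← hlB, Multiset.coe_le]
      exact ((List.take_sublist _ _).trans (List.drop_sublist _ _)).subperm
    have hlt : j - i < Nat.find hpred := by
      show j - i < m
      rw [← hBcard, hb_card]
      omega
    exact Nat.find_min hpred hlt ⟨↑l', hl'sub.trans hBS,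
      by rw [Ne, Multiset.coe_eq_zero]; exact hl'ne, hl'map,
      by rw [Multiset.coe_card, hl'len]⟩
  -- the finsets
  set N := commutator G
  set R : Finset ↥N := (Finset.range lB.length).image (fun i => (⟨r i, hrN i⟩ : ↥N)) with hRdef
  have hRcard : R.card = lB.length := by
    rw [hRdef, Finset.card_image_of_injOn, Finset.card_range]
    intro i hi j hj hij2
    simp only [Finset.coe_range, Set.mem_Iio] at hi hj
    have : r i = r j := by
      have := congrArg Subtype.val hij2
      simpa using this
    by_contra hne
    rcases lt_trichotomy i j with h | h | h
    · exact key_inj i j h hj this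
    · exact hne h
    · exact key_inj j i h hi this.symm
  have hRne : R.Nonempty := by
    refine ⟨⟨r 0, hrN 0⟩, ?_⟩
    rw [hRdef]
    exact Finset.mem_image.mpr ⟨0, Finset.mem_range.mpr hbpos, rfl⟩
  -- the complement
  set S₂ := S - B with hS₂def
  have hS₂le : S₂ ≤ S := tsub_le_self
  have hBS2 : B + S₂ = S := add_tsub_cancel_of_le hBS
  have hS2map : (Multiset.map (Abelianization.of : G →* Abelianization G) S₂).prod = 1 := by
    have h14 : (Multiset.map (Abelianization.of : G →* Abelianization G) (B + S₂)).prod = 1 := by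
      rw [hBS2]; exact hmap
    rwa [Multiset.map_add, Multiset.prod_add, hBmap, one_mul] at h14
  have h1' : (1 : G) ∉ piSub S₂ := fun h => h1 (piSub_mono hS₂le h)
  have hcardS2 : Multiset.card S₂ = Multiset.card S - Multiset.card B :=
    Multiset.card_sub hBS
  have hcardBle : Multiset.card B ≤ Multiset.card S := Multiset.card_le_card hBS
  have hcardBpos : 0 < Multiset.card B := Multiset.card_pos.mpr hB0
  have hIH : min q (Multiset.card S₂) ≤ (piN N S₂).card := by
    apply ih (Multiset.card S₂) _ S₂ rfl hS2map h1'
    omega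
  set X : Finset ↥N := insert (1 : ↥N) (piN N S₂) with hXdef
  have h1X : (1 : ↥N) ∉ piN N S₂ := by
    rw [mem_piN]
    intro h
    apply h1'
    simpa using h
  have hXcard : X.card = (piN N S₂).card + 1 := Finset.card_insert_of_notMem h1X
  have hXne : X.Nonempty := ⟨1, Finset.mem_insert_self _ _⟩
  -- R * X ⊆ piN N S
  have hsub : R * X ⊆ piN N S := by
    intro z hz
    rw [Finset.mem_mul] at hz
    obtain ⟨a, ha, x, hx, rfl⟩ := hz
    obtain ⟨i, hi, rfl⟩ := Finset.mem_image.mp ha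
    rw [mem_piN]
    rcases Finset.mem_insert.mp hx with rfl | hx2
    · refine ⟨rot i, hrot_ne i, by rw [hrot_coe]; exact hBS, ?_⟩
      rw [hrot_prod i]
      simp
    · obtain ⟨lx, hlxne, hlxle, hlxprod⟩ := mem_piN.mp hx2
      refine ⟨rot i ++ lx, by simp [hrot_ne i], ?_, ?_⟩
      · have : (↑(rot i ++ lx) : Multiset G) = B + ↑lx := by
          rw [← Multiset.coe_add, hrot_coe]
        rw [this, ← hBS2]
        exact add_le_add (le_refl B) hlxle
      · rw [List.prod_append, hrot_prod i, hlxprod]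
        simp
  -- Cauchy-Davenport
  have hCD := cd_prime hq hNcard hRne hXne
  have hA : (R * X).card ≤ (piN N S).card := Finset.card_le_card hsub
  have hmono : (piN N S₂).card ≤ (piN N S).card := Finset.card_le_card (piN_mono hS₂le)
  rw [hRcard, hXcard] at hCD
  rw [← hb_card] at hCD
  omega


theorem stmt11 {G : Type*} [Group G] [Finite G] (p q : ℕ) (hp : p.Prime) (hq : q.Prime)
    (hpodd : Odd p) (hqodd : Odd q) (hpq : p ∣ q - 1)
    (hcard : Nat.card G = p * q) (hna : ¬ ∀ a b : G, a * b = b * a)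
    (T : Multiset G) (hlen : q ≤ Multiset.card T)
    (hprod : ∃ g ∈ prodSet T, g ∈ commutator G) :
    ∃ T' : Multiset G, T' ≤ T ∧ T' ≠ 0 ∧ IsProductOne T' := by
  classical
  by_contra hcon
  have h1 : (1 : G) ∉ piSub T := by
    rintro ⟨l, hlne, hle, hprod1⟩
    exact hcon ⟨↑l, hle, by rwa [Ne, Multiset.coe_eq_zero], ⟨l, rfl, hprod1⟩⟩
  obtain ⟨hNcard, hcent⟩ := commutator_card_eq hp hq hpq hcard hna
  obtain ⟨g, ⟨l, hl, hlprod⟩, hgN⟩ := hprod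
  have hmap : (Multiset.map (Abelianization.of : G →* Abelianization G) T).prod = 1 := by
    rw [← hl, Multiset.map_coe, Multiset.prod_coe, ← map_list_prod, hlprod]
    exact (QuotientGroup.eq_one_iff g).mpr hgN
  have hmain := main_count hq hNcard hcent (Multiset.card T) T rfl hmap h1
  rw [min_eq_left hlen] at hmain
  haveI : Fintype ↥(commutator G) := Fintype.ofFinite _
  have hsub : piN (commutator G) T ⊆ Finset.univ.erase 1 := by
    intro x hx
    rw [Finset.mem_erase]
    refine ⟨?_, Finset.mem_univ x⟩
    rintro rfl
    exact h1 (by simpa using mem_piN.mp hx)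
  have hle2 : (piN (commutator G) T).card ≤ Fintype.card ↥(commutator G) - 1 := by
    have h3 := Finset.card_le_card hsub
    rwa [Finset.card_erase_of_mem (Finset.mem_univ _), Finset.card_univ] at h3
  have hfq : Fintype.card ↥(commutator G) = q := by
    rw [← Nat.card_eq_fintype_card]; exact hNcard
  have hq2 : 2 ≤ q := hq.two_le
  omega
end

section
/- Let p, q be odd primes with p | q−1, and let G = ⟨x, y : x^p = y^q = 1, yx = xy^s⟩ with ord_q(s) = p. In the monoid B(G) of product-one sequences over G, there is a product of three atoms equal to a product of 2q+2 atoms; consequently 2q+2 ∈ U₃(B(G)), i.e., ρ₃(B(G)) ≥ 2q + 2 = D(G) + 2. Explicitly, with S₁ = y^[2q−2]·x·(x^{−1}y^{s^{p−1}+1}), S₂ = (y^{−1})^[2q−2]·(x^{−1}y^{−1})·(xy^{−1}), S₃ = x^{−1}·(xy^{−s−1})·(xy^{s})·(x^{−1}y^{s^{p−1}}), one has S₁·S₂·S₃ = U₁·U₂·U₃·U₄·U₅^[2q−2] where U₁ = x·x^{−1}, U₂ = (x^{−1}y^{s^{p−1}+1})·(xy^{−s−1}), U₃ = (x^{−1}y^{−1})·(xy^{s}),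 U₄ = (x^{−1}y^{s^{p−1}})·(xy^{−1}), U₅ = y·y^{−1}, and all of S₁, S₂, S₃, U₁, …, U₅ are atoms of B(G). -/
section aux
variable {α : Type*}

lemma split0 (c : α) (l : List α) (j : ℕ) (h : (l : Multiset α) = Multiset.replicate j c) :
    l = List.replicate j c := by
  rw [← Multiset.coe_replicate] at h
  exact List.eq_replicate_iff.mpr ⟨by simpa using congrArg Multiset.card h,
    fun b hb => Multiset.eq_of_mem_replicate (h ▸ (Multiset.mem_coe.mpr hb))⟩

lemma split1 {c g : α} (hg : g ≠ c) :
    ∀ (l : List α) (j : ℕ), (l : Multiset α) = Multiset.replicate j c + {g} →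
    ∃ m r, m + r = j ∧ l = List.replicate m c ++ g :: List.replicate r c := by
  intro l
  induction l with
  | nil =>
    intro j h
    exfalso
    have := congrArg Multiset.card h
    simp at this
  | cons hd tl ih =>
    intro j h
    have hcons : ((hd :: tl : List α) : Multiset α) = hd ::ₘ (tl : Multiset α) := rfl
    rw [hcons] at h
    by_cases hc : hd = c
    · subst hc
      cases j with
      | zero =>
        exfalso
        simp only [Multiset.replicate_zero, zero_add] at h
        have : hd ∈ ({g} : Multiset α) := h ▸ Multiset.mem_cons_self _ _
        simp only [Multiset.mem_singleton] at this
        exact hg this.symm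
      | succ j' =>
        rw [Multiset.replicate_succ, Multiset.cons_add, Multiset.cons_inj_right] at h
        obtain ⟨m, r, hmr, hl⟩ := ih j' h
        exact ⟨m + 1, r, by omega, by simp [hl, List.replicate_succ]⟩
    · have hmem : hd ∈ Multiset.replicate j c + ({g} : Multiset α) :=
        h ▸ Multiset.mem_cons_self _ _
      rw [Multiset.mem_add] at hmem
      have hdg : hd = g := by
        rcases hmem with h' | h'
        · exact absurd (Multiset.eq_of_mem_replicate h') hc
        · simpa using h'
      subst hdg
      have heq : Multiset.replicate j c + ({hd} : Multiset α) = hd ::ₘ Multiset.replicate j c := by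
        rw [add_comm, Multiset.singleton_add]
      rw [heq, Multiset.cons_inj_right] at h
      exact ⟨0, j, by omega, by simp [split0 c tl j h]⟩

lemma split2 {c g₁ g₂ : α} (h₁ : g₁ ≠ c) (h₂ : g₂ ≠ c) :
    ∀ (l : List α) (j : ℕ), (l : Multiset α) = Multiset.replicate j c + {g₁, g₂} →
    ∃ m k r, m + k + r = j ∧
      (l = List.replicate m c ++ g₁ :: (List.replicate k c ++ g₂ :: List.replicate r c) ∨
       l = List.replicate m c ++ g₂ :: (List.replicate k c ++ g₁ :: List.replicate r c)) := by
  intro l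
  induction l with
  | nil =>
    intro j h
    exfalso
    have := congrArg Multiset.card h
    simp at this
  | cons hd tl ih =>
    intro j h
    have hcons : ((hd :: tl : List α) : Multiset α) = hd ::ₘ (tl : Multiset α) := rfl
    rw [hcons] at h
    by_cases hc : hd = c
    · subst hc
      cases j with
      | zero =>
        exfalso
        simp only [Multiset.replicate_zero, zero_add] at h
        have : hd ∈ ({g₁, g₂} : Multiset α) := h ▸ Multiset.mem_cons_self _ _
        rw [Multiset.insert_eq_cons] at this
        rcases Multiset.mem_cons.mp this with h' | h'
        · exact h₁ h'.symm
        · have h'' : hd = g₂ := by simpa using h'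
          exact h₂ h''.symm
      | succ j' =>
        rw [Multiset.replicate_succ, Multiset.cons_add, Multiset.cons_inj_right] at h
        obtain ⟨m, k, r, hmr, hl⟩ := ih j' h
        refine ⟨m + 1, k, r, by omega, ?_⟩
        rcases hl with hl | hl
        · exact Or.inl (by simp [hl, List.replicate_succ])
        · exact Or.inr (by simp [hl, List.replicate_succ])
    · have hmem : hd ∈ Multiset.replicate j c + ({g₁, g₂} : Multiset α) :=
        h ▸ Multiset.mem_cons_self _ _
      rw [Multiset.mem_add] at hmem
      have hdg : hd = g₁ ∨ hd = g₂ := by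
        rcases hmem with h' | h'
        · exact absurd (Multiset.eq_of_mem_replicate h') hc
        · rw [Multiset.insert_eq_cons] at h'
          rcases Multiset.mem_cons.mp h' with h' | h'
          · exact Or.inl h'
          · exact Or.inr (by simpa using h')
      rcases hdg with hdg | hdg
      · subst hdg
        have heq : Multiset.replicate j c + ({hd, g₂} : Multiset α)
            = hd ::ₘ (Multiset.replicate j c + {g₂}) := by
          rw [Multiset.insert_eq_cons, add_comm, Multiset.cons_add, add_comm]
        rw [heq, Multiset.cons_inj_right] at h
        obtain ⟨m, r, hmr, hl⟩ := split1 h₂ tl j h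
        exact ⟨0, m, r, by omega, Or.inl (by simp [hl])⟩
      · subst hdg
        have heq : Multiset.replicate j c + ({g₁, hd} : Multiset α)
            = hd ::ₘ (Multiset.replicate j c + {g₁}) := by
          rw [Multiset.insert_eq_cons, show ({hd} : Multiset α) = hd ::ₘ 0 from rfl,
            Multiset.cons_swap, add_comm, Multiset.cons_add, add_comm]
          rfl
        rw [heq, Multiset.cons_inj_right] at h
        obtain ⟨m, r, hmr, hl⟩ := split1 h₁ tl j h
        exact ⟨0, m, r, by omega, Or.inr (by simp [hl])⟩

lemma decomp3 [DecidableEq α] (T : Multiset α) (a b c : α)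
    (hab : a ≠ b) (hac : a ≠ c) (hbc : b ≠ c)
    (h : ∀ g ∈ T, g = a ∨ g = b ∨ g = c) :
    T = Multiset.replicate (T.count a) a + Multiset.replicate (T.count b) b +
        Multiset.replicate (T.count c) c := by
  ext g
  simp only [Multiset.count_add, Multiset.count_replicate]
  by_cases hga : g = a
  · subst hga; simp [Ne.symm hab, Ne.symm hac]
  · by_cases hgb : g = b
    · subst hgb; simp [hab, Ne.symm hbc]
    · by_cases hgc : g = c
      · subst hgc; simp [hac, hbc]
      · have hT : g ∉ T := fun hg => by rcases h g hg with h' | h' | h' <;> tauto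
        simp [Multiset.count_eq_zero_of_notMem hT,
          (show ¬ a = g from fun h' => hga h'.symm),
          (show ¬ b = g from fun h' => hgb h'.symm),
          (show ¬ c = g from fun h' => hgc h'.symm)]

lemma pair_eq {u v a b : α} (h : ({u, v} : Multiset α) = {a, b}) :
    (u = a ∧ v = b) ∨ (u = b ∧ v = a) := by
  rw [Multiset.insert_eq_cons, Multiset.insert_eq_cons] at h
  rcases Multiset.cons_eq_cons.mp h with ⟨h1, h2⟩ | ⟨-, t, h1, h2⟩
  · exact Or.inl ⟨h1, Multiset.singleton_inj.mp h2⟩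
  · have ht : t = 0 := by
      have := congrArg Multiset.card h1
      rw [Multiset.card_singleton, Multiset.card_cons] at this
      exact Multiset.card_eq_zero.mp (by omega)
    subst ht
    simp only [Multiset.cons_zero, Multiset.singleton_inj] at h1 h2
    exact Or.inr ⟨h2.symm, h1⟩

end aux

section grp
variable {G : Type*} [Group G]

lemma aux_singleton {a : G} (h : IsProductOne ({a} : Multiset G)) : a = 1 := by
  obtain ⟨l, hl, hp⟩ := h
  rw [Multiset.coe_eq_singleton] at hl
  subst hl
  simpa using hp

lemma aux_pair_prod {a b : G} (h : IsProductOne ({a, b} : Multiset G)) : a * b = 1 := by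
  obtain ⟨l, hl, hp⟩ := h
  have hlen : l.length = 2 := by simpa using congrArg Multiset.card hl
  match l, hlen with
  | [u, v], _ =>
    have huv : ({u, v} : Multiset G) = ({a, b} : Multiset G) := hl
    simp only [List.prod_cons, List.prod_nil, mul_one] at hp
    rcases pair_eq huv with ⟨rfl, rfl⟩ | ⟨rfl, rfl⟩
    · exact hp
    · rw [mul_eq_one_iff_eq_inv] at hp
      subst hp
      exact mul_inv_cancel _

lemma aux_card1 {T : Multiset G} (h : IsProductOne T) (hc : Multiset.card T = 1) :
    ∀ a ∈ T, a = 1 := by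
  obtain ⟨a, rfl⟩ := Multiset.card_eq_one.mp hc
  intro b hb
  rw [Multiset.mem_singleton] at hb
  subst hb
  exact aux_singleton h

/-- atoms of the form {g, g⁻¹} -/
lemma pair_atom {g : G} (hg : g ≠ 1) : IsMinimalProductOne ({g, g⁻¹} : Multiset G) := by
  refine ⟨by simp, ⟨[g, g⁻¹], rfl, by simp⟩, ?_⟩
  rintro ⟨T₁, T₂, h1, h2, heq, hp1, hp2⟩
  have hc : Multiset.card T₁ + Multiset.card T₂ = 2 := by
    have := congrArg Multiset.card heq
    simp at this
    omega
  have hc1 : Multiset.card T₁ = 1 := by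
    have l1 := Multiset.card_pos.mpr h1
    have l2 := Multiset.card_pos.mpr h2
    omega
  obtain ⟨a, rfl⟩ := Multiset.card_eq_one.mp hc1
  have ha : a ∈ ({g, g⁻¹} : Multiset G) := heq ▸ Multiset.mem_add.mpr (Or.inl (by simp))
  have ha1 : a = 1 := aux_singleton hp1
  subst ha1
  rw [Multiset.insert_eq_cons] at ha
  rcases Multiset.mem_cons.mp ha with h' | h'
  · exact hg h'.symm
  · simp only [Multiset.mem_singleton] at h'
    exact hg (by rw [← inv_inv g, ← h', inv_one])

end grp


set_option maxHeartbeats 3200000 in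
theorem stmt16 {G : Type*} [Group G] (p q s : ℕ) (hp : p.Prime) (hq : q.Prime)
    (hpodd : Odd p) (hqodd : Odd q) (hpq : p ∣ q - 1)
    (x y : G) (hx : x ^ p = 1) (hy : y ^ q = 1) (hyx : y * x = x * y ^ s)
    (hs : orderOf ((s : ZMod q)) = p)
    (hgen : Subgroup.closure {x, y} = ⊤) (hcard : Nat.card G = p * q)
    (S₁ S₂ S₃ U₁ U₂ U₃ U₄ U₅ : Multiset G)
    (hS₁ : S₁ = Multiset.replicate (2 * q - 2) y + {x, x⁻¹ * y ^ (s ^ (p - 1) + 1)})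
    (hS₂ : S₂ = Multiset.replicate (2 * q - 2) y⁻¹ + {x⁻¹ * y⁻¹, x * y⁻¹})
    (hS₃ : S₃ = {x⁻¹, x * (y ^ (s + 1))⁻¹, x * y ^ s, x⁻¹ * y ^ (s ^ (p - 1))})
    (hU₁ : U₁ = {x, x⁻¹})
    (hU₂ : U₂ = {x⁻¹ * y ^ (s ^ (p - 1) + 1), x * (y ^ (s + 1))⁻¹})
    (hU₃ : U₃ = {x⁻¹ * y⁻¹, x * y ^ s})
    (hU₄ : U₄ = {x⁻¹ * y ^ (s ^ (p - 1)), x * y⁻¹})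
    (hU₅ : U₅ = {y, y⁻¹}) :
    IsMinimalProductOne S₁ ∧ IsMinimalProductOne S₂ ∧ IsMinimalProductOne S₃ ∧
    IsMinimalProductOne U₁ ∧ IsMinimalProductOne U₂ ∧ IsMinimalProductOne U₃ ∧
    IsMinimalProductOne U₄ ∧ IsMinimalProductOne U₅ ∧
    S₁ + S₂ + S₃ = U₁ + U₂ + U₃ + U₄ + (2 * q - 2) • U₅ := by
  classical
  -- numeric facts
  have hp2 : 2 ≤ p := hp.two_le
  have hq2 : 2 ≤ q := hq.two_le
  have hp3 : 3 ≤ p := by have h2 := Nat.odd_iff.mp hpodd; omega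
  have hq3 : 3 ≤ q := by have h2 := Nat.odd_iff.mp hqodd; omega
  have hple : p ≤ q - 1 := Nat.le_of_dvd (by omega) hpq
  have hne : p ≠ q := by omega
  have hcop : Nat.Coprime p q := (Nat.coprime_primes hp hq).mpr hne
  haveI : Fact q.Prime := ⟨hq⟩
  -- ZMod q facts
  have hzp : ((s : ZMod q)) ^ p = 1 := by rw [← hs]; exact pow_orderOf_eq_one _
  have hz1 : (s : ZMod q) ≠ 1 := by
    intro h; rw [h, orderOf_one] at hs; omega
  have hz0 : (s : ZMod q) ≠ 0 := by
    intro h; rw [h, zero_pow (by omega : p ≠ 0)] at hzp; exact zero_ne_one hzp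
  have hzp1 : ((s : ZMod q)) ^ (p - 1) ≠ 1 := by
    intro h
    have h2 := orderOf_dvd_of_pow_eq_one h
    rw [hs] at h2
    have := Nat.le_of_dvd (by omega) h2
    omega
  have hzm1 : (s : ZMod q) ≠ -1 := by
    intro h
    have h2 : ((s : ZMod q)) ^ 2 = 1 := by rw [h]; ring
    have h3 := orderOf_dvd_of_pow_eq_one h2
    rw [hs] at h3
    have := Nat.le_of_dvd (by omega) h3
    omega
  have hzpm1 : ((s : ZMod q)) ^ (p - 1) ≠ -1 := by
    intro h
    have h2 : ((s : ZMod q)) ^ (2 * (p - 1)) = 1 := by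
      rw [mul_comm, pow_mul, h]; ring
    have h3 := orderOf_dvd_of_pow_eq_one h2
    rw [hs] at h3
    rcases (Nat.Prime.dvd_mul hp).mp h3 with h' | h'
    · have := Nat.le_of_dvd (by omega) h'; omega
    · have := Nat.le_of_dvd (by omega) h'; omega
  have hzz : ((s : ZMod q)) ^ (p - 1) * (s : ZMod q) = 1 := by
    rw [← pow_succ, show p - 1 + 1 = p by omega, hzp]
  -- finiteness and basic group facts
  haveI hGfin : Finite G := Nat.finite_of_card_ne_zero (by rw [hcard]; positivity)
  have hx1 : x ≠ 1 := by
    intro h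
    have htop : Subgroup.zpowers y = ⊤ := by
      rw [← hgen]
      refine le_antisymm (Subgroup.zpowers_le.mpr (Subgroup.subset_closure (by simp))) ?_
      rw [Subgroup.closure_le]
      rintro g (rfl | rfl)
      · rw [h]; exact Subgroup.one_mem _
      · exact Subgroup.mem_zpowers _
    have h1 : orderOf y = p * q := by
      rw [← Nat.card_zpowers, htop, Subgroup.card_top, hcard]
    have h2 : orderOf y ∣ q := orderOf_dvd_of_pow_eq_one hy
    rw [h1] at h2
    have := Nat.le_of_dvd (by omega) h2
    nlinarith
  have hy1 : y ≠ 1 := by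
    intro h
    have htop : Subgroup.zpowers x = ⊤ := by
      rw [← hgen]
      refine le_antisymm (Subgroup.zpowers_le.mpr (Subgroup.subset_closure (by simp))) ?_
      rw [Subgroup.closure_le]
      rintro g (rfl | rfl)
      · exact Subgroup.mem_zpowers _
      · rw [h]; exact Subgroup.one_mem _
    have h1 : orderOf x = p * q := by
      rw [← Nat.card_zpowers, htop, Subgroup.card_top, hcard]
    have h2 : orderOf x ∣ p := orderOf_dvd_of_pow_eq_one hx
    rw [h1] at h2
    have := Nat.le_of_dvd (by omega) h2
    nlinarith
  have hox : orderOf x = p := by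
    rcases (Nat.Prime.eq_one_or_self_of_dvd hp _ (orderOf_dvd_of_pow_eq_one hx)) with h | h
    · exact absurd (orderOf_eq_one_iff.mp h) hx1
    · exact h
  have hoy : orderOf y = q := by
    rcases (Nat.Prime.eq_one_or_self_of_dvd hq _ (orderOf_dvd_of_pow_eq_one hy)) with h | h
    · exact absurd (orderOf_eq_one_iff.mp h) hy1
    · exact h
  have hxz : ∀ a : ℤ, x ^ a = 1 ↔ (p : ℤ) ∣ a := by
    intro a
    rw [← orderOf_dvd_iff_zpow_eq_one, hox]
  have hyz : ∀ b : ℤ, y ^ b = 1 ↔ (q : ℤ) ∣ b := by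
    intro b
    rw [← orderOf_dvd_iff_zpow_eq_one, hoy]
  have hyE : ∀ a b : ℤ, (q : ℤ) ∣ a - b → y ^ a = y ^ b := by
    intro a b h
    exact orderOf_dvd_sub_iff_zpow_eq_zpow.mp (by rw [hoy]; exact h)
  -- the key normal form lemma
  have NF0 : ∀ a b : ℤ, x ^ a * y ^ b = 1 ↔ ((p : ℤ) ∣ a ∧ (q : ℤ) ∣ b) := by
    intro a b
    constructor
    · intro h
      have hxy : x ^ a = (y ^ b)⁻¹ := eq_inv_of_mul_eq_one_left h
      have h1 : orderOf (x ^ a) ∣ p := hox ▸ orderOf_dvd_of_mem_zpowers ⟨a, rfl⟩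
      have h2 : orderOf (x ^ a) ∣ q := by
        rw [hxy, orderOf_inv]
        exact hoy ▸ orderOf_dvd_of_mem_zpowers ⟨b, rfl⟩
      have h3 : orderOf (x ^ a) = 1 := Nat.dvd_one.mp (hcop ▸ Nat.dvd_gcd h1 h2)
      have h4 : x ^ a = 1 := orderOf_eq_one_iff.mp h3
      refine ⟨(hxz a).mp h4, (hyz b).mp ?_⟩
      rwa [h4, one_mul] at h
    · rintro ⟨h1, h2⟩
      rw [(hxz a).mpr h1, (hyz b).mpr h2, one_mul]
  have NFeq : ∀ a b a' b' : ℤ,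
      x ^ a * y ^ b = x ^ a' * y ^ b' ↔ ((p : ℤ) ∣ a - a' ∧ (q : ℤ) ∣ b - b') := by
    intro a b a' b'
    rw [← NF0 (a - a') (b - b')]
    constructor
    · intro h
      have key : x ^ (a - a') * y ^ (b - b') = x ^ (-a') * ((x ^ a * y ^ b) * y ^ (-b')) := by
        group
      rw [key, h]
      group
    · intro h
      have key : x ^ a * y ^ b
          = x ^ a' * ((x ^ (-a') * ((x ^ a * y ^ b) * y ^ (-b'))) * y ^ b') := by group
      have key2 : x ^ (-a') * ((x ^ a * y ^ b) * y ^ (-b')) = x ^ (a - a') * y ^ (b - b') := by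
        group
      rw [key, key2, h]
      group
  -- commutation lemmas
  have hconj : x⁻¹ * y * x = y ^ ((s : ℕ) : ℤ) := by
    rw [mul_assoc, hyx, ← mul_assoc, inv_mul_cancel, one_mul, zpow_natCast]
  have L1 : ∀ b : ℤ, y ^ b * x = x * y ^ (b * (s : ℤ)) := by
    intro b
    have h1 : x⁻¹ * y ^ b * x = y ^ (b * (s : ℤ)) := by
      have := conj_zpow (a := x⁻¹) (b := y) (i := b)
      rw [inv_inv] at this
      calc x⁻¹ * y ^ b * x = (x⁻¹ * y * x) ^ b := this.symm
        _ = (y ^ ((s:ℕ):ℤ)) ^ b := by rw [hconj]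
        _ = y ^ (b * (s : ℤ)) := by rw [← zpow_mul, mul_comm]
    calc y ^ b * x = x * (x⁻¹ * y ^ b * x) := by group
      _ = x * y ^ (b * (s : ℤ)) := by rw [h1]
  have hq_sp : (q : ℤ) ∣ (s : ℤ) ^ p - 1 := by
    have hcast : (((s : ℤ) ^ p - 1 : ℤ) : ZMod q) = 0 := by push_cast; rw [hzp]; ring
    exact (ZMod.intCast_zmod_eq_zero_iff_dvd _ q).mp hcast
  have hconj2 : x * y * x⁻¹ = y ^ ((s : ℤ) ^ (p - 1)) := by
    have h1 : x⁻¹ * y ^ ((s : ℤ) ^ (p - 1)) * x = y := by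
      have hc := conj_zpow (a := x⁻¹) (b := y) (i := ((s:ℤ) ^ (p - 1)))
      rw [inv_inv] at hc
      calc x⁻¹ * y ^ ((s : ℤ) ^ (p - 1)) * x = (x⁻¹ * y * x) ^ ((s : ℤ) ^ (p - 1)) := hc.symm
        _ = y ^ (((s:ℕ):ℤ) * (s : ℤ) ^ (p - 1)) := by rw [hconj, ← zpow_mul]
        _ = y ^ (1 : ℤ) := hyE _ _ (by
            rw [show ((s:ℕ):ℤ) * (s : ℤ) ^ (p - 1) = (s:ℤ) ^ p by
              rw [← pow_succ', show p - 1 + 1 = p by omega]]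
            simpa using hq_sp)
        _ = y := zpow_one y
    calc x * y * x⁻¹ = x * (x⁻¹ * y ^ ((s : ℤ) ^ (p - 1)) * x) * x⁻¹ := by rw [h1]
      _ = y ^ ((s : ℤ) ^ (p - 1)) := by group
  have L2 : ∀ b : ℤ, y ^ b * x⁻¹ = x⁻¹ * y ^ (b * (s : ℤ) ^ (p - 1)) := by
    intro b
    have h1 : x * y ^ b * x⁻¹ = y ^ (b * (s : ℤ) ^ (p - 1)) := by
      calc x * y ^ b * x⁻¹ = (x * y * x⁻¹) ^ b := (conj_zpow ..).symm
        _ = (y ^ ((s : ℤ) ^ (p - 1))) ^ b := by rw [hconj2]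
        _ = y ^ (b * (s : ℤ) ^ (p - 1)) := by rw [← zpow_mul, mul_comm]
    calc y ^ b * x⁻¹ = x⁻¹ * (x * y ^ b * x⁻¹) := by group
      _ = x⁻¹ * y ^ (b * (s : ℤ) ^ (p - 1)) := by rw [h1]
  have M1 : ∀ b c : ℤ, y ^ b * (x * y ^ c) = x * y ^ (b * (s : ℤ) + c) := by
    intro b c
    rw [← mul_assoc, L1, mul_assoc, ← zpow_add]
  have M2 : ∀ b c : ℤ, y ^ b * (x⁻¹ * y ^ c) = x⁻¹ * y ^ (b * (s : ℤ) ^ (p - 1) + c) := by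
    intro b c
    rw [← mul_assoc, L2, mul_assoc, ← zpow_add]
  have M3 : ∀ c : ℤ, x * (x⁻¹ * y ^ c) = y ^ c := fun c => by group
  have M4 : ∀ c : ℤ, x⁻¹ * (x * y ^ c) = y ^ c := fun c => by group

  -- divisibility refuters
  have hpns : ∀ a : ℤ, a ≠ 0 → |a| < p → ¬ (p:ℤ) ∣ a := by
    intro a ha hlt hdvd
    have h2 : (p:ℤ) ≤ |a| := Int.le_of_dvd (abs_pos.mpr ha) ((dvd_abs _ _).mpr hdvd)
    exact absurd h2 (not_le.mpr hlt)
  have notP1 : ¬ (p:ℤ) ∣ 1 := hpns 1 one_ne_zero (by rw [abs_one]; omega)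
  have notPm1 : ¬ (p:ℤ) ∣ -1 := hpns (-1) (by norm_num) (by rw [abs_neg, abs_one]; omega)
  have notP2 : ¬ (p:ℤ) ∣ 2 := hpns 2 two_ne_zero (by rw [abs_two]; omega)
  have notPm2 : ¬ (p:ℤ) ∣ -2 := hpns (-2) (by norm_num) (by rw [abs_neg, abs_two]; omega)
  have hqd : ∀ e : ℤ, (q:ℤ) ∣ e → ((e : ZMod q) = 0) :=
    fun e h => (ZMod.intCast_zmod_eq_zero_iff_dvd e q).mpr h
  -- conversions to ℤ powers
  have ew : x⁻¹ * y ^ (s ^ (p - 1) + 1) = x⁻¹ * y ^ ((s:ℤ)^(p-1) + 1) := by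
    rw [← zpow_natCast y (s ^ (p - 1) + 1)]; congr 1
  have eB : x * (y ^ (s + 1))⁻¹ = x * y ^ (-((s:ℤ) + 1)) := by
    rw [← zpow_natCast y (s + 1), ← zpow_neg]; norm_cast
  have eC : x * y ^ s = x * y ^ ((s:ℤ)) := by rw [zpow_natCast]
  have eD : x⁻¹ * y ^ (s ^ (p - 1)) = x⁻¹ * y ^ ((s:ℤ)^(p-1)) := by
    rw [← zpow_natCast y (s ^ (p - 1))]; congr 1
  have eyi : (y⁻¹ : G) = y ^ (-1:ℤ) := (zpow_neg_one y).symm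
  have eu : x⁻¹ * y⁻¹ = x⁻¹ * y ^ (-1:ℤ) := by rw [eyi]
  have ev : x * y⁻¹ = x * y ^ (-1:ℤ) := by rw [eyi]
  rw [ew] at hS₁ hU₂
  rw [eB] at hS₃ hU₂
  rw [eC] at hS₃ hU₃
  rw [eD] at hS₃ hU₄
  rw [eu] at hS₂ hU₃
  rw [ev] at hS₂ hU₄
  set W : G := x⁻¹ * y ^ ((s:ℤ)^(p-1) + 1) with hW
  set Bg : G := x * y ^ (-((s:ℤ) + 1)) with hBg
  set Cg : G := x * y ^ ((s:ℤ)) with hCg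
  set Dg : G := x⁻¹ * y ^ ((s:ℤ)^(p-1)) with hDg
  set ug : G := x⁻¹ * y ^ (-1:ℤ) with hug
  set vg : G := x * y ^ (-1:ℤ) with hvg
  -- nonidentity helpers
  have ne1x : ∀ b : ℤ, x * y ^ b ≠ 1 := by
    intro b h
    rw [show x * y ^ b = x ^ (1:ℤ) * y ^ b by rw [zpow_one]] at h
    exact notP1 ((NF0 _ _).mp h).1
  have ne1xi : ∀ b : ℤ, x⁻¹ * y ^ b ≠ 1 := by
    intro b h
    rw [show x⁻¹ * y ^ b = x ^ (-1:ℤ) * y ^ b by rw [zpow_neg_one]] at h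
    exact notPm1 ((NF0 _ _).mp h).1
  have ne1x2 : ∀ b : ℤ, x * (x * y ^ b) ≠ 1 := by
    intro b h
    rw [show x * (x * y ^ b) = x ^ (2:ℤ) * y ^ b by
      rw [show (2:ℤ) = 1 + 1 by norm_num, zpow_add, zpow_one, mul_assoc]] at h
    exact notP2 ((NF0 _ _).mp h).1
  have ne1xi2 : ∀ b : ℤ, x⁻¹ * (x⁻¹ * y ^ b) ≠ 1 := by
    intro b h
    rw [show x⁻¹ * (x⁻¹ * y ^ b) = x ^ (-2:ℤ) * y ^ b by
      rw [show (-2:ℤ) = -1 + -1 by norm_num, zpow_add, zpow_neg_one, mul_assoc]] at h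
    exact notPm2 ((NF0 _ _).mp h).1
  have ne1y : ∀ b : ℤ, ((b : ZMod q) ≠ 0) → y ^ b ≠ 1 := by
    intro b hb h
    exact hb (hqd b ((hyz b).mp h))
  -- distinctness facts
  have hxy_ne : x ≠ y := by
    intro h
    exact ne1x (-1) (by rw [h]; group)
  have hW_ne_y : W ≠ y := by
    intro h
    apply ne1xi ((s:ℤ)^(p-1) + 1 + (-1))
    calc x⁻¹ * y ^ ((s:ℤ)^(p-1) + 1 + (-1)) = W * y ^ (-1:ℤ) := by
          rw [hW, mul_assoc, ← zpow_add]
      _ = y * y ^ (-1:ℤ) := by rw [h]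
      _ = 1 := by group
  have hx_ne_W : x ≠ W := by
    intro h
    exact ne1xi2 _ (by rw [← hW, ← h]; group)
  have hu_ne : ug ≠ y⁻¹ := by
    intro h
    apply ne1xi (-1 + 1)
    calc x⁻¹ * y ^ (-1 + 1 : ℤ) = ug * y ^ (1:ℤ) := by rw [hug, mul_assoc, ← zpow_add]
      _ = y⁻¹ * y ^ (1:ℤ) := by rw [h]
      _ = 1 := by group
  have hv_ne : vg ≠ y⁻¹ := by
    intro h
    apply ne1x (-1 + 1)
    calc x * y ^ (-1 + 1 : ℤ) = vg * y ^ (1:ℤ) := by rw [hvg, mul_assoc, ← zpow_add]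
      _ = y⁻¹ * y ^ (1:ℤ) := by rw [h]
      _ = 1 := by group
  have huv_ne : ug ≠ vg := by
    intro h
    rw [hug, hvg] at h
    have h2 : x⁻¹ = x := mul_right_cancel h
    apply ne1xi2 0
    rw [zpow_zero, mul_one]
    nth_rewrite 2 [h2]
    group
  -- product extraction helpers
  have hyim : ∀ m : ℕ, (y⁻¹ : G) ^ m = y ^ (-(m:ℤ)) := by
    intro m; rw [inv_pow, ← zpow_natCast, ← zpow_neg]
  have prod_form0 : ∀ (c : G) (T : Multiset G) (j : ℕ), T = Multiset.replicate j c →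
      IsProductOne T → c ^ j = 1 := by
    rintro c T j hT ⟨l, hl, hprod⟩
    rw [hT] at hl
    rw [split0 c l j hl] at hprod
    simpa using hprod
  have prod_form1 : ∀ (c g : G), g ≠ c → ∀ (T : Multiset G) (j : ℕ),
      T = Multiset.replicate j c + {g} → IsProductOne T →
      ∃ m r : ℕ, m + r = j ∧ c ^ m * (g * c ^ r) = 1 := by
    rintro c g hgc T j hT ⟨l, hl, hprod⟩
    rw [hT] at hl
    obtain ⟨m, r, hmr, hl'⟩ := split1 hgc l j hl
    subst hl'
    refine ⟨m, r, hmr, ?_⟩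
    simpa [List.prod_append, List.prod_cons, List.prod_replicate] using hprod
  have prod_form2 : ∀ (c g₁ g₂ : G), g₁ ≠ c → g₂ ≠ c → ∀ (T : Multiset G) (j : ℕ),
      T = Multiset.replicate j c + {g₁, g₂} → IsProductOne T →
      ∃ m k r : ℕ, m + k + r = j ∧
        (c ^ m * (g₁ * (c ^ k * (g₂ * c ^ r))) = 1 ∨
         c ^ m * (g₂ * (c ^ k * (g₁ * c ^ r))) = 1) := by
    rintro c g₁ g₂ h₁ h₂ T j hT ⟨l, hl, hprod⟩
    rw [hT] at hl
    obtain ⟨m, k, r, hmkr, hl'⟩ := split2 h₁ h₂ l j hl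
    rcases hl' with hl' | hl' <;> subst hl' <;> refine ⟨m, k, r, hmkr, ?_⟩
    · exact Or.inl (by simpa [List.prod_append, List.prod_cons, List.prod_replicate] using hprod)
    · exact Or.inr (by simpa [List.prod_append, List.prod_cons, List.prod_replicate] using hprod)

  -- specific "not product one" lemmas
  have npS1x : ∀ (T : Multiset G) (j : ℕ), T = Multiset.replicate j y + {x} →
      ¬ IsProductOne T := by
    intro T j hT hPO
    obtain ⟨m, r, hmr, hone⟩ := prod_form1 y x hxy_ne T j hT hPO
    apply ne1x ((m:ℤ) * (s:ℤ) + r)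
    calc x * y ^ ((m:ℤ) * (s:ℤ) + (r:ℤ)) = y ^ (m:ℤ) * (x * y ^ (r:ℤ)) := (M1 _ _).symm
      _ = y ^ m * (x * y ^ r) := by rw [zpow_natCast, zpow_natCast]
      _ = 1 := hone
  have npS1W : ∀ (T : Multiset G) (j : ℕ), T = Multiset.replicate j y + {W} →
      ¬ IsProductOne T := by
    intro T j hT hPO
    obtain ⟨m, r, hmr, hone⟩ := prod_form1 y W hW_ne_y T j hT hPO
    apply ne1xi ((m:ℤ) * ((s:ℤ)^(p-1)) + ((s:ℤ)^(p-1) + 1 + (r:ℤ)))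
    calc x⁻¹ * y ^ ((m:ℤ) * ((s:ℤ)^(p-1)) + ((s:ℤ)^(p-1) + 1 + (r:ℤ)))
        = y ^ (m:ℤ) * (x⁻¹ * y ^ ((s:ℤ)^(p-1) + 1 + (r:ℤ))) := (M2 _ _).symm
      _ = y ^ (m:ℤ) * (W * y ^ (r:ℤ)) := by rw [hW, mul_assoc, ← zpow_add]
      _ = y ^ m * (W * y ^ r) := by rw [zpow_natCast, zpow_natCast]
      _ = 1 := hone
  have npS2u : ∀ (T : Multiset G) (j : ℕ), T = Multiset.replicate j y⁻¹ + {ug} →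
      ¬ IsProductOne T := by
    intro T j hT hPO
    obtain ⟨m, r, hmr, hone⟩ := prod_form1 y⁻¹ ug hu_ne T j hT hPO
    apply ne1xi ((-(m:ℤ)) * ((s:ℤ)^(p-1)) + (-1 + -(r:ℤ)))
    calc x⁻¹ * y ^ ((-(m:ℤ)) * ((s:ℤ)^(p-1)) + (-1 + -(r:ℤ)))
        = y ^ (-(m:ℤ)) * (x⁻¹ * y ^ (-1 + -(r:ℤ))) := (M2 _ _).symm
      _ = y ^ (-(m:ℤ)) * (ug * y ^ (-(r:ℤ))) := by rw [hug, mul_assoc, ← zpow_add]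
      _ = (y⁻¹) ^ m * (ug * (y⁻¹) ^ r) := by rw [hyim, hyim]
      _ = 1 := hone
  have npS2v : ∀ (T : Multiset G) (j : ℕ), T = Multiset.replicate j y⁻¹ + {vg} →
      ¬ IsProductOne T := by
    intro T j hT hPO
    obtain ⟨m, r, hmr, hone⟩ := prod_form1 y⁻¹ vg hv_ne T j hT hPO
    apply ne1x ((-(m:ℤ)) * (s:ℤ) + (-1 + -(r:ℤ)))
    calc x * y ^ ((-(m:ℤ)) * (s:ℤ) + (-1 + -(r:ℤ)))
        = y ^ (-(m:ℤ)) * (x * y ^ (-1 + -(r:ℤ))) := (M1 _ _).symm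
      _ = y ^ (-(m:ℤ)) * (vg * y ^ (-(r:ℤ))) := by rw [hvg, mul_assoc, ← zpow_add]
      _ = (y⁻¹) ^ m * (vg * (y⁻¹) ^ r) := by rw [hyim, hyim]
      _ = 1 := hone
  -- cast of q - 2
  have hc2 : ((q - 2 : ℕ) : ZMod q) = -2 := by
    have h1 : ((q - 2 : ℕ) : ZMod q) = ((q : ℕ) : ZMod q) - 2 := by
      rw [Nat.cast_sub (by omega)]; norm_num
    rw [h1, ZMod.natCast_self]; ring
  -- middle case for S₁
  have npS1mid : ∀ T : Multiset G, T = Multiset.replicate (q - 2) y + {x, W} →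
      ¬ IsProductOne T := by
    intro T hT hPO
    obtain ⟨m, k, r, hmkr, hone⟩ := prod_form2 y x W hxy_ne hW_ne_y T (q - 2) hT hPO
    have hmz : ((m : ZMod q)) + k + r + 2 = 0 := by
      have h1 : ((m + k + r : ℕ) : ZMod q) = ((q - 2 : ℕ) : ZMod q) := by rw [hmkr]
      push_cast at h1
      rw [hc2] at h1
      linear_combination h1
    have hkq : k ≤ q - 2 := by omega
    rcases hone with h1 | h1
    · rw [show (y:G) ^ m = y ^ (m:ℤ) from (zpow_natCast _ _).symm,
        show (y:G) ^ k = y ^ (k:ℤ) from (zpow_natCast _ _).symm,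
        show (y:G) ^ r = y ^ (r:ℤ) from (zpow_natCast _ _).symm,
        hW, mul_assoc x⁻¹, ← zpow_add, M2, M3, ← zpow_add] at h1
      have hdq := hqd _ ((hyz _).mp h1)
      push_cast at hdq
      have hfact : ((k:ZMod q) + 1) * ((s:ZMod q)^(p-1) - 1) = 0 := by
        linear_combination hdq - hmz
      rcases mul_eq_zero.mp hfact with hk | hw
      · have hcast : ((k + 1 : ℕ) : ZMod q) = 0 := by push_cast; linear_combination hk
        have hdd := (ZMod.natCast_eq_zero_iff _ q).mp hcast
        have := Nat.le_of_dvd (by omega) hdd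
        omega
      · exact hzp1 (by linear_combination hw)
    · rw [show (y:G) ^ m = y ^ (m:ℤ) from (zpow_natCast _ _).symm,
        show (y:G) ^ k = y ^ (k:ℤ) from (zpow_natCast _ _).symm,
        show (y:G) ^ r = y ^ (r:ℤ) from (zpow_natCast _ _).symm,
        M1, hW, mul_assoc x⁻¹, M1, M4, ← zpow_add] at h1
      have hdq := hqd _ ((hyz _).mp h1)
      push_cast at hdq
      have hfact : ((k:ZMod q) + 1) * ((s:ZMod q) - 1) = 0 := by
        linear_combination hdq - hmz - hzz
      rcases mul_eq_zero.mp hfact with hk | hw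
      · have hcast : ((k + 1 : ℕ) : ZMod q) = 0 := by push_cast; linear_combination hk
        have hdd := (ZMod.natCast_eq_zero_iff _ q).mp hcast
        have := Nat.le_of_dvd (by omega) hdd
        omega
      · exact hz1 (by linear_combination hw)
  -- middle case for S₂
  have npS2mid : ∀ T : Multiset G, T = Multiset.replicate (q - 2) y⁻¹ + {ug, vg} →
      ¬ IsProductOne T := by
    intro T hT hPO
    obtain ⟨m, k, r, hmkr, hone⟩ := prod_form2 y⁻¹ ug vg hu_ne hv_ne T (q - 2) hT hPO
    have hmz : ((m : ZMod q)) + k + r + 2 = 0 := by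
      have h1 : ((m + k + r : ℕ) : ZMod q) = ((q - 2 : ℕ) : ZMod q) := by rw [hmkr]
      push_cast at h1
      rw [hc2] at h1
      linear_combination h1
    have hkq : k ≤ q - 2 := by omega
    rcases hone with h1 | h1
    · rw [hyim, hyim, hyim, hug, hvg, mul_assoc x, ← zpow_add, M1,
        mul_assoc x⁻¹, M1, M4, ← zpow_add] at h1
      have hdq := hqd _ ((hyz _).mp h1)
      push_cast at hdq
      have hfact : ((k:ZMod q) + 1) * ((s:ZMod q) - 1) = 0 := by
        linear_combination (-1 : ZMod q) * hdq - hmz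
      rcases mul_eq_zero.mp hfact with hk | hw
      · have hcast : ((k + 1 : ℕ) : ZMod q) = 0 := by push_cast; linear_combination hk
        have hdd := (ZMod.natCast_eq_zero_iff _ q).mp hcast
        have := Nat.le_of_dvd (by omega) hdd
        omega
      · exact hz1 (by linear_combination hw)
    · rw [hyim, hyim, hyim, hug, hvg, mul_assoc x⁻¹, ← zpow_add, M2,
        mul_assoc x, M2, M3, ← zpow_add] at h1
      have hdq := hqd _ ((hyz _).mp h1)
      push_cast at hdq
      have hfact : ((k:ZMod q) + 1) * ((s:ZMod q)^(p-1) - 1) = 0 := by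
        linear_combination (-1 : ZMod q) * hdq - hmz
      rcases mul_eq_zero.mp hfact with hk | hw
      · have hcast : ((k + 1 : ℕ) : ZMod q) = 0 := by push_cast; linear_combination hk
        have hdd := (ZMod.natCast_eq_zero_iff _ q).mp hcast
        have := Nat.le_of_dvd (by omega) hdd
        omega
      · exact hzp1 (by linear_combination hw)

  have hrepq : ∀ n : ℕ, q ∣ n → n ≠ 0 → n ≤ 2*q - 2 → n = q := by
    intro n hdvd h0 hle
    obtain ⟨c, rfl⟩ := hdvd
    rcases Nat.lt_or_ge c 2 with hcc | hcc
    · interval_cases c <;> omega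
    · have h2 : q * 2 ≤ q * c := Nat.mul_le_mul_left q hcc
      omega
  -- the atom S₁
  have atomS1 : IsMinimalProductOne (Multiset.replicate (2*q-2) y + ({x, W} : Multiset G)) := by
    refine ⟨?_, ?_, ?_⟩
    · intro h
      have hcard2 := congrArg Multiset.card h
      simp at hcard2
    · refine ⟨x :: (List.replicate (q-1) y ++ W :: List.replicate (q-1) y), ?_, ?_⟩
      · have hco : ((x :: (List.replicate (q-1) y ++ W :: List.replicate (q-1) y) : List G) :
            Multiset G)
            = {x} + (Multiset.replicate (q-1) y + ({W} + Multiset.replicate (q-1) y)) := by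
          rw [← Multiset.cons_coe, ← Multiset.coe_add, ← Multiset.cons_coe,
            Multiset.coe_replicate, ← Multiset.singleton_add, ← Multiset.singleton_add]
        rw [hco, show 2*q-2 = (q-1)+(q-1) by omega, Multiset.replicate_add,
          Multiset.insert_eq_cons, ← Multiset.singleton_add]
        abel
      · have hprod : (x :: (List.replicate (q-1) y ++ W :: List.replicate (q-1) y)).prod
            = x * (y ^ (q-1) * (W * y ^ (q-1))) := by
          simp [List.prod_cons, List.prod_append, List.prod_replicate]
        rw [hprod, show (y:G) ^ (q-1) = y ^ ((q-1:ℕ):ℤ) from (zpow_natCast _ _).symm,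
          hW, mul_assoc x⁻¹, ← zpow_add, M2, M3]
        apply (hyz _).mpr
        refine ⟨(s:ℤ)^(p-1) + 1, ?_⟩
        push_cast [Nat.cast_sub (show 1 ≤ q by omega)]
        ring
    · rintro ⟨T₁, T₂, hT1ne, hT2ne, heqS, hPO1, hPO2⟩
      have hsub : ∀ g ∈ Multiset.replicate (2*q-2) y + ({x, W} : Multiset G),
          g = y ∨ g = x ∨ g = W := by
        intro g hg
        rcases Multiset.mem_add.mp hg with h' | h'
        · exact Or.inl (Multiset.eq_of_mem_replicate h')
        · rw [Multiset.insert_eq_cons] at h'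
          rcases Multiset.mem_cons.mp h' with h' | h'
          · exact Or.inr (Or.inl h')
          · exact Or.inr (Or.inr (by simpa using h'))
      have hsub1 : ∀ g ∈ T₁, g = y ∨ g = x ∨ g = W := fun g hg =>
        hsub g (heqS ▸ Multiset.mem_add.mpr (Or.inl hg))
      have hsub2 : ∀ g ∈ T₂, g = y ∨ g = x ∨ g = W := fun g hg =>
        hsub g (heqS ▸ Multiset.mem_add.mpr (Or.inr hg))
      have hd1 := decomp3 T₁ y x W (Ne.symm hxy_ne) (Ne.symm hW_ne_y) hx_ne_W hsub1
      have hd2 := decomp3 T₂ y x W (Ne.symm hxy_ne) (Ne.symm hW_ne_y) hx_ne_W hsub2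
      have hSy : Multiset.count y (Multiset.replicate (2*q-2) y + ({x, W} : Multiset G))
          = 2*q-2 := by
        simp [Multiset.count_replicate, Multiset.insert_eq_cons, Multiset.count_cons,
          Multiset.count_singleton, hxy_ne, hx_ne_W, hW_ne_y,
          Ne.symm hxy_ne, Ne.symm hx_ne_W, Ne.symm hW_ne_y]
      have hSx : Multiset.count x (Multiset.replicate (2*q-2) y + ({x, W} : Multiset G)) = 1 := by
        simp [Multiset.count_replicate, Multiset.insert_eq_cons, Multiset.count_cons,
          Multiset.count_singleton, hxy_ne, hx_ne_W, hW_ne_y,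
          Ne.symm hxy_ne, Ne.symm hx_ne_W, Ne.symm hW_ne_y]
      have hSW : Multiset.count W (Multiset.replicate (2*q-2) y + ({x, W} : Multiset G)) = 1 := by
        simp [Multiset.count_replicate, Multiset.insert_eq_cons, Multiset.count_cons,
          Multiset.count_singleton, hxy_ne, hx_ne_W, hW_ne_y,
          Ne.symm hxy_ne, Ne.symm hx_ne_W, Ne.symm hW_ne_y]
      have hcy : T₁.count y + T₂.count y = 2*q-2 := by
        have h0 := congrArg (Multiset.count y) heqS
        rw [hSy, Multiset.count_add] at h0
        omega
      have hcx : T₁.count x + T₂.count x = 1 := by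
        have h0 := congrArg (Multiset.count x) heqS
        rw [hSx, Multiset.count_add] at h0
        omega
      have hcW : T₁.count W + T₂.count W = 1 := by
        have h0 := congrArg (Multiset.count W) heqS
        rw [hSW, Multiset.count_add] at h0
        omega
      have hbx : T₁.count x = 0 ∨ T₁.count x = 1 := by omega
      have hbW : T₁.count W = 0 ∨ T₁.count W = 1 := by omega
      rcases hbx with hb | hb <;> rcases hbW with he | he
      · -- T₁ pure y, T₂ has both
        rw [hb, he] at hd1
        simp only [Multiset.replicate_zero, add_zero] at hd1
        have hpow := prod_form0 y T₁ _ hd1 hPO1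
        have hdvd : q ∣ T₁.count y := hoy ▸ orderOf_dvd_of_pow_eq_one hpow
        have ha1 : T₁.count y ≠ 0 := by
          intro h0
          rw [h0] at hd1
          simp only [Multiset.replicate_zero] at hd1
          exact hT1ne hd1
        have haq : T₁.count y = q := hrepq _ hdvd ha1 (by omega)
        have hb2 : T₂.count x = 1 := by omega
        have he2 : T₂.count W = 1 := by omega
        have ha2 : T₂.count y = q - 2 := by omega
        rw [hb2, he2, ha2] at hd2
        apply npS1mid T₂ ?_ hPO2
        rw [hd2, Multiset.replicate_one, Multiset.replicate_one, add_assoc,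
          Multiset.insert_eq_cons, ← Multiset.singleton_add]
      · -- T₁ = y's + {W}
        rw [hb, he] at hd1
        simp only [Multiset.replicate_zero, add_zero, Multiset.replicate_one] at hd1
        exact npS1W T₁ _ hd1 hPO1
      · -- T₁ = y's + {x}
        rw [hb, he] at hd1
        simp only [Multiset.replicate_zero, add_zero, Multiset.replicate_one] at hd1
        exact npS1x T₁ _ hd1 hPO1
      · -- T₁ has both, T₂ pure y
        have hb2 : T₂.count x = 0 := by omega
        have he2 : T₂.count W = 0 := by omega
        rw [hb2, he2] at hd2
        simp only [Multiset.replicate_zero, add_zero] at hd2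
        have hpow := prod_form0 y T₂ _ hd2 hPO2
        have hdvd : q ∣ T₂.count y := hoy ▸ orderOf_dvd_of_pow_eq_one hpow
        have ha2 : T₂.count y ≠ 0 := by
          intro h0
          rw [h0] at hd2
          simp only [Multiset.replicate_zero] at hd2
          exact hT2ne hd2
        have haq : T₂.count y = q := hrepq _ hdvd ha2 (by omega)
        have ha1 : T₁.count y = q - 2 := by omega
        rw [hb, he, ha1] at hd1
        apply npS1mid T₁ ?_ hPO1
        rw [hd1, Multiset.replicate_one, Multiset.replicate_one, add_assoc,
          Multiset.insert_eq_cons, ← Multiset.singleton_add]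

  -- the atom S₂
  have atomS2 : IsMinimalProductOne (Multiset.replicate (2*q-2) y⁻¹ + ({ug, vg} : Multiset G)) := by
    refine ⟨?_, ?_, ?_⟩
    · intro h
      have hcard2 := congrArg Multiset.card h
      simp at hcard2
    · refine ⟨ug :: (List.replicate (q-1) y⁻¹ ++ vg :: List.replicate (q-1) y⁻¹), ?_, ?_⟩
      · have hco : ((ug :: (List.replicate (q-1) y⁻¹ ++ vg :: List.replicate (q-1) y⁻¹) :
            List G) : Multiset G)
            = {ug} + (Multiset.replicate (q-1) y⁻¹ + ({vg} + Multiset.replicate (q-1) y⁻¹)) := by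
          rw [← Multiset.cons_coe, ← Multiset.coe_add, ← Multiset.cons_coe,
            Multiset.coe_replicate, ← Multiset.singleton_add, ← Multiset.singleton_add]
        rw [hco, show 2*q-2 = (q-1)+(q-1) by omega, Multiset.replicate_add,
          Multiset.insert_eq_cons, ← Multiset.singleton_add]
        abel
      · have hprod : (ug :: (List.replicate (q-1) y⁻¹ ++ vg :: List.replicate (q-1) y⁻¹)).prod
            = ug * (y⁻¹ ^ (q-1) * (vg * y⁻¹ ^ (q-1))) := by
          simp [List.prod_cons, List.prod_append, List.prod_replicate]
        rw [hprod, hyim, hug, hvg, mul_assoc x, ← zpow_add, M1, mul_assoc x⁻¹, M1, M4]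
        apply (hyz _).mpr
        refine ⟨-(s:ℤ) - 1, ?_⟩
        push_cast [Nat.cast_sub (show 1 ≤ q by omega)]
        ring
    · rintro ⟨T₁, T₂, hT1ne, hT2ne, heqS, hPO1, hPO2⟩
      have hsub : ∀ g ∈ Multiset.replicate (2*q-2) y⁻¹ + ({ug, vg} : Multiset G),
          g = y⁻¹ ∨ g = ug ∨ g = vg := by
        intro g hg
        rcases Multiset.mem_add.mp hg with h' | h'
        · exact Or.inl (Multiset.eq_of_mem_replicate h')
        · rw [Multiset.insert_eq_cons] at h'
          rcases Multiset.mem_cons.mp h' with h' | h'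
          · exact Or.inr (Or.inl h')
          · exact Or.inr (Or.inr (by simpa using h'))
      have hsub1 : ∀ g ∈ T₁, g = y⁻¹ ∨ g = ug ∨ g = vg := fun g hg =>
        hsub g (heqS ▸ Multiset.mem_add.mpr (Or.inl hg))
      have hsub2 : ∀ g ∈ T₂, g = y⁻¹ ∨ g = ug ∨ g = vg := fun g hg =>
        hsub g (heqS ▸ Multiset.mem_add.mpr (Or.inr hg))
      have hd1 := decomp3 T₁ y⁻¹ ug vg (Ne.symm hu_ne) (Ne.symm hv_ne) huv_ne hsub1
      have hd2 := decomp3 T₂ y⁻¹ ug vg (Ne.symm hu_ne) (Ne.symm hv_ne) huv_ne hsub2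
      have hSy : Multiset.count y⁻¹ (Multiset.replicate (2*q-2) y⁻¹ + ({ug, vg} : Multiset G))
          = 2*q-2 := by
        simp [Multiset.count_replicate, Multiset.insert_eq_cons, Multiset.count_cons,
          Multiset.count_singleton, hu_ne, hv_ne, huv_ne,
          Ne.symm hu_ne, Ne.symm hv_ne, Ne.symm huv_ne]
      have hSx : Multiset.count ug (Multiset.replicate (2*q-2) y⁻¹ + ({ug, vg} : Multiset G))
          = 1 := by
        simp [Multiset.count_replicate, Multiset.insert_eq_cons, Multiset.count_cons,
          Multiset.count_singleton, hu_ne, hv_ne, huv_ne,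
          Ne.symm hu_ne, Ne.symm hv_ne, Ne.symm huv_ne]
      have hSW : Multiset.count vg (Multiset.replicate (2*q-2) y⁻¹ + ({ug, vg} : Multiset G))
          = 1 := by
        simp [Multiset.count_replicate, Multiset.insert_eq_cons, Multiset.count_cons,
          Multiset.count_singleton, hu_ne, hv_ne, huv_ne,
          Ne.symm hu_ne, Ne.symm hv_ne, Ne.symm huv_ne]
      have hcy : T₁.count y⁻¹ + T₂.count y⁻¹ = 2*q-2 := by
        have h0 := congrArg (Multiset.count y⁻¹) heqS
        rw [hSy, Multiset.count_add] at h0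
        omega
      have hcx : T₁.count ug + T₂.count ug = 1 := by
        have h0 := congrArg (Multiset.count ug) heqS
        rw [hSx, Multiset.count_add] at h0
        omega
      have hcW : T₁.count vg + T₂.count vg = 1 := by
        have h0 := congrArg (Multiset.count vg) heqS
        rw [hSW, Multiset.count_add] at h0
        omega
      have hbx : T₁.count ug = 0 ∨ T₁.count ug = 1 := by omega
      have hbW : T₁.count vg = 0 ∨ T₁.count vg = 1 := by omega
      rcases hbx with hb | hb <;> rcases hbW with he | he
      · rw [hb, he] at hd1
        simp only [Multiset.replicate_zero, add_zero] at hd1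
        have hpow := prod_form0 y⁻¹ T₁ _ hd1 hPO1
        rw [inv_pow, inv_eq_one] at hpow
        have hdvd : q ∣ T₁.count y⁻¹ := hoy ▸ orderOf_dvd_of_pow_eq_one hpow
        have ha1 : T₁.count y⁻¹ ≠ 0 := by
          intro h0
          rw [h0] at hd1
          simp only [Multiset.replicate_zero] at hd1
          exact hT1ne hd1
        have haq : T₁.count y⁻¹ = q := hrepq _ hdvd ha1 (by omega)
        have hb2 : T₂.count ug = 1 := by omega
        have he2 : T₂.count vg = 1 := by omega
        have ha2 : T₂.count y⁻¹ = q - 2 := by omega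
        rw [hb2, he2, ha2] at hd2
        apply npS2mid T₂ ?_ hPO2
        rw [hd2, Multiset.replicate_one, Multiset.replicate_one, add_assoc,
          Multiset.insert_eq_cons, ← Multiset.singleton_add]
      · rw [hb, he] at hd1
        simp only [Multiset.replicate_zero, add_zero, Multiset.replicate_one] at hd1
        exact npS2v T₁ _ hd1 hPO1
      · rw [hb, he] at hd1
        simp only [Multiset.replicate_zero, add_zero, Multiset.replicate_one] at hd1
        exact npS2u T₁ _ hd1 hPO1
      · have hb2 : T₂.count ug = 0 := by omega
        have he2 : T₂.count vg = 0 := by omega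
        rw [hb2, he2] at hd2
        simp only [Multiset.replicate_zero, add_zero] at hd2
        have hpow := prod_form0 y⁻¹ T₂ _ hd2 hPO2
        rw [inv_pow, inv_eq_one] at hpow
        have hdvd : q ∣ T₂.count y⁻¹ := hoy ▸ orderOf_dvd_of_pow_eq_one hpow
        have ha2 : T₂.count y⁻¹ ≠ 0 := by
          intro h0
          rw [h0] at hd2
          simp only [Multiset.replicate_zero] at hd2
          exact hT2ne hd2
        have haq : T₂.count y⁻¹ = q := hrepq _ hdvd ha2 (by omega)
        have ha1 : T₁.count y⁻¹ = q - 2 := by omega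
        rw [hb, he, ha1] at hd1
        apply npS2mid T₁ ?_ hPO1
        rw [hd1, Multiset.replicate_one, Multiset.replicate_one, add_assoc,
          Multiset.insert_eq_cons, ← Multiset.singleton_add]

  -- the atom S₃
  have atomS3 : IsMinimalProductOne ({x⁻¹, Bg, Cg, Dg} : Multiset G) := by
    have hel : ∀ g ∈ ({x⁻¹, Bg, Cg, Dg} : Multiset G), g ≠ 1 := by
      intro g hg
      simp only [Multiset.insert_eq_cons, Multiset.mem_cons, Multiset.mem_singleton] at hg
      rcases hg with rfl | rfl | rfl | rfl
      · exact inv_ne_one.mpr hx1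
      · rw [hBg]; exact ne1x _
      · rw [hCg]; exact ne1x _
      · rw [hDg]; exact ne1xi _
    refine ⟨?_, ?_, ?_⟩
    · intro h
      have hcard2 := congrArg Multiset.card h
      simp [Multiset.insert_eq_cons] at hcard2
    · refine ⟨[Cg, x⁻¹, Bg, Dg], ?_, ?_⟩
      · have h1 : (([Cg, x⁻¹, Bg, Dg] : List G) : Multiset G)
            = {Cg} + ({x⁻¹} + ({Bg} + {Dg})) := by
          rw [← Multiset.cons_coe, ← Multiset.cons_coe, ← Multiset.cons_coe,
            Multiset.coe_singleton, ← Multiset.singleton_add, ← Multiset.singleton_add,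
            ← Multiset.singleton_add]
        rw [h1, show ({x⁻¹, Bg, Cg, Dg} : Multiset G) = {x⁻¹} + ({Bg} + ({Cg} + {Dg})) by
          rw [Multiset.insert_eq_cons, Multiset.insert_eq_cons, Multiset.insert_eq_cons,
            ← Multiset.singleton_add, ← Multiset.singleton_add, ← Multiset.singleton_add]]
        abel
      · have hprod : ([Cg, x⁻¹, Bg, Dg] : List G).prod = Cg * (x⁻¹ * (Bg * Dg)) := by
          simp [List.prod_cons]
        have hBD : Bg * Dg
            = y ^ (-((s:ℤ)+1) * (s:ℤ)^(p-1) + (s:ℤ)^(p-1)) := by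
          rw [hBg, hDg, mul_assoc, M2, M3]
        rw [hprod, hBD, hCg, mul_assoc, M2, M3]
        exact (hyz _).mpr ⟨0, by ring⟩
    · rintro ⟨T₁, T₂, hT1ne, hT2ne, heqS, hPO1, hPO2⟩
      have hct : Multiset.card T₁ + Multiset.card T₂ = 4 := by
        have h0 := congrArg Multiset.card heqS
        simp [Multiset.insert_eq_cons] at h0
        omega
      have hc1pos := Multiset.card_pos.mpr hT1ne
      have hc2pos := Multiset.card_pos.mpr hT2ne
      have hsplit : Multiset.card T₁ = 1 ∨ Multiset.card T₁ = 2 ∨ Multiset.card T₁ = 3 := by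
        omega
      rcases hsplit with hc | hc | hc
      · obtain ⟨a, ha⟩ := Multiset.exists_mem_of_ne_zero hT1ne
        have ha1 : a = 1 := aux_card1 hPO1 hc a ha
        have haS : a ∈ ({x⁻¹, Bg, Cg, Dg} : Multiset G) := by
          rw [heqS]; exact Multiset.mem_add.mpr (Or.inl ha)
        exact hel a haS ha1
      · obtain ⟨a, b, hTab⟩ := Multiset.card_eq_two.mp hc
        subst hTab
        have h := aux_pair_prod hPO1
        have haS : a ∈ ({x⁻¹, Bg, Cg, Dg} : Multiset G) := by
          rw [heqS]; exact Multiset.mem_add.mpr (Or.inl (by simp))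
        have hbS : b ∈ ({x⁻¹, Bg, Cg, Dg} : Multiset G) := by
          rw [heqS]; exact Multiset.mem_add.mpr (Or.inl (by simp))
        simp only [Multiset.insert_eq_cons, Multiset.mem_cons, Multiset.mem_singleton]
          at haS hbS
        rcases haS with rfl | rfl | rfl | rfl <;> rcases hbS with rfl | rfl | rfl | rfl
        · exact ne1xi2 0 (by rw [zpow_zero, mul_one]; exact h)
        · rw [hBg, M4] at h
          have h0 := hqd _ ((hyz _).mp h); push_cast at h0
          exact hzm1 (by linear_combination -h0)
        · rw [hCg, M4] at h
          have h0 := hqd _ ((hyz _).mp h); push_cast at h0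
          exact hz0 h0
        · rw [hDg] at h
          exact ne1xi2 _ h
        · rw [hBg, mul_assoc, L2, M3] at h
          have h0 := hqd _ ((hyz _).mp h); push_cast at h0
          rcases mul_eq_zero.mp (show ((s:ZMod q) + 1) * ((s:ZMod q)^(p-1)) = 0 by
            linear_combination -h0) with h' | h'
          · exact hzm1 (by linear_combination h')
          · exact one_ne_zero (show (1 : ZMod q) = 0 by rw [← hzz, h', zero_mul])
        · rw [hBg, mul_assoc, M1] at h
          exact ne1x2 _ h
        · rw [hBg, hCg, mul_assoc, M1] at h
          exact ne1x2 _ h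
        · rw [hBg, hDg, mul_assoc, M2, M3] at h
          have h0 := hqd _ ((hyz _).mp h); push_cast at h0
          exact zero_ne_one (show (0 : ZMod q) = 1 by linear_combination h0 + hzz)
        · rw [hCg, mul_assoc, L2, M3] at h
          have h0 := hqd _ ((hyz _).mp h); push_cast at h0
          exact zero_ne_one (show (0 : ZMod q) = 1 by linear_combination -h0 + hzz)
        · rw [hCg, hBg, mul_assoc, M1] at h
          exact ne1x2 _ h
        · rw [hCg, mul_assoc, M1] at h
          exact ne1x2 _ h
        · rw [hCg, hDg, mul_assoc, M2, M3] at h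
          have h0 := hqd _ ((hyz _).mp h); push_cast at h0
          rcases mul_eq_zero.mp (show ((s:ZMod q) + 1) * ((s:ZMod q)^(p-1)) = 0 by
            linear_combination h0) with h' | h'
          · exact hzm1 (by linear_combination h')
          · exact one_ne_zero (show (1 : ZMod q) = 0 by rw [← hzz, h', zero_mul])
        · rw [hDg, mul_assoc, L2] at h
          exact ne1xi2 _ h
        · rw [hDg, hBg, mul_assoc, M1, M4] at h
          have h0 := hqd _ ((hyz _).mp h); push_cast at h0
          exact hz0 (by linear_combination -h0 + hzz)
        · rw [hDg, hCg, mul_assoc, M1, M4] at h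
          have h0 := hqd _ ((hyz _).mp h); push_cast at h0
          exact hzm1 (by linear_combination h0 - hzz)
        · rw [hDg, mul_assoc, M2] at h
          exact ne1xi2 _ h
      · have hc2 : Multiset.card T₂ = 1 := by omega
        obtain ⟨a, ha⟩ := Multiset.exists_mem_of_ne_zero hT2ne
        have ha1 : a = 1 := aux_card1 hPO2 hc2 a ha
        have haS : a ∈ ({x⁻¹, Bg, Cg, Dg} : Multiset G) := by
          rw [heqS]; exact Multiset.mem_add.mpr (Or.inr ha)
        exact hel a haS ha1
  -- inverse pair facts for U₂ U₃ U₄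
  have hps : (s:ℤ)^(p-1) * (s:ℤ) = (s:ℤ)^p := by
    rw [← pow_succ, show p-1+1 = p by omega]
  have hWB : W * Bg = 1 := by
    rw [hW, hBg, mul_assoc x⁻¹, M1, M4]
    apply (hyz _).mpr
    rw [show ((s:ℤ)^(p-1) + 1) * (s:ℤ) + -((s:ℤ)+1) = (s:ℤ)^p - 1 by linear_combination hps]
    exact hq_sp
  have hUC : ug * Cg = 1 := by
    rw [hug, hCg, mul_assoc x⁻¹, M1, M4]
    exact (hyz _).mpr ⟨0, by ring⟩
  have hDv : Dg * vg = 1 := by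
    rw [hDg, hvg, mul_assoc x⁻¹, M1, M4]
    apply (hyz _).mpr
    rw [show (s:ℤ)^(p-1) * (s:ℤ) + -1 = (s:ℤ)^p - 1 by linear_combination hps]
    exact hq_sp
  have neW : W ≠ 1 := by rw [hW]; exact ne1xi _
  have neu : ug ≠ 1 := by rw [hug]; exact ne1xi _
  have neD : Dg ≠ 1 := by rw [hDg]; exact ne1xi _
  refine ⟨?_, ?_, ?_, ?_, ?_, ?_, ?_, ?_, ?_⟩
  · rw [hS₁]; exact atomS1
  · rw [hS₂]; exact atomS2
  · rw [hS₃]; exact atomS3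
  · rw [hU₁]; exact pair_atom hx1
  · rw [hU₂, show Bg = W⁻¹ from (inv_eq_iff_mul_eq_one.mpr hWB).symm]
    exact pair_atom neW
  · rw [hU₃, show Cg = ug⁻¹ from (inv_eq_iff_mul_eq_one.mpr hUC).symm]
    exact pair_atom neu
  · rw [hU₄, show vg = Dg⁻¹ from (inv_eq_iff_mul_eq_one.mpr hDv).symm]
    exact pair_atom neD
  · rw [hU₅]; exact pair_atom hy1
  · rw [hS₁, hS₂, hS₃, hU₁, hU₂, hU₃, hU₄, hU₅]
    rw [show (2*q-2) • ({y, y⁻¹} : Multiset G)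
        = Multiset.replicate (2*q-2) y + Multiset.replicate (2*q-2) y⁻¹ by
      rw [Multiset.insert_eq_cons, ← Multiset.singleton_add, smul_add,
        Multiset.nsmul_singleton, Multiset.nsmul_singleton]]
    simp only [Multiset.insert_eq_cons, ← Multiset.singleton_add]
    abel
end
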